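/- arXiv:hep-th/9407154 — 6 statements merged into one kernel-verified Lean document; each statement's English description precedes it below -/
import Mathlib

section
/- Let τ be in the upper half-plane, assume θ₁'(0|τ) ≠ 0, and let w ∈ ℂ with θ₁(w|τ) ≠ 0. Then the function J_w(t) = ∂_t σ(w,t) + (ρ(t) + ρ(w))·σ(w,t) is regular at t = 0: there exists c ∈ ℂ such that J_w(t) tends to c as t → 0 within t ≠ 0 (the simple poles of ∂_tσ, ρ and σ at t = 0 cancel). -/
open Complex

/-- Jacobi's theta function `θ₁(t|τ)`. -/
noncomputable def theta1 (τ t : ℂ) : ℂ :=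
  -∑' j : ℤ, Complex.exp ((Real.pi : ℂ) * Complex.I * ((j : ℂ) + 1/2)^2 * τ +
      2 * (Real.pi : ℂ) * Complex.I * ((j : ℂ) + 1/2) * (t + 1/2))

/-- The derivative `θ₁'(t|τ)` of `θ₁` in `t`. -/
noncomputable def theta1' (τ t : ℂ) : ℂ := deriv (theta1 τ) t

/-- `ρ(t) = θ₁'(t|τ)/θ₁(t|τ)`. -/
noncomputable def rho (τ t : ℂ) : ℂ := theta1' τ t / theta1 τ t

/-- `σ(w,t) = θ₁(w−t|τ)·θ₁'(0|τ)/(θ₁(w|τ)·θ₁(t|τ))`. -/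
noncomputable def sigma (τ w t : ℂ) : ℂ :=
  theta1 τ (w - t) * theta1' τ 0 / (theta1 τ w * theta1 τ t)

/-!
Clearing denominators, `∂ₜσ(w,t) + (ρ(t) + ρ(w))σ(w,t) = θ₁'(0)/θ₁(w)² · g(t)/θ₁(t)` with
`g(t) = θ₁'(w)θ₁(w−t) − θ₁'(w−t)θ₁(w)`. Both `g` and `θ₁` vanish at `0`, and `θ₁'(0) ≠ 0`, so
`g/θ₁` tends to `g'(0)/θ₁'(0)` there.
-/

open Filter Topology Real

lemma theta1_eq_jacobiTheta₂ (τ t : ℂ) :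
    theta1 τ t = -(cexp (π * I * τ / 4 + π * I * (t + 1 / 2)) *
        jacobiTheta₂ (t + 1 / 2 + τ / 2) τ) := by
  rw [theta1, jacobiTheta₂, ← tsum_mul_left]
  congr 1
  refine tsum_congr fun j => ?_
  rw [jacobiTheta₂_term, ← Complex.exp_add]
  ring_nf

lemma differentiable_theta1 {τ : ℂ} (hτ : 0 < τ.im) : Differentiable ℂ (theta1 τ) := by
  rw [funext (theta1_eq_jacobiTheta₂ τ)]
  intro t
  have := differentiableAt_jacobiTheta₂_fst (t + 1 / 2 + τ / 2) hτ
  fun_prop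

/-- Evenness, periodicity and quasi-periodicity of `θ(·|τ)` map the half period `1/2 + τ/2` to
itself with the factor `-1`. -/
lemma jacobiTheta₂_half_add_half_eq_zero (τ : ℂ) : jacobiTheta₂ (1 / 2 + τ / 2) τ = 0 := by
  have h := jacobiTheta₂_add_left' (-(1 / 2 + τ / 2) + 1) τ
  rw [jacobiTheta₂_add_left, jacobiTheta₂_neg_left,
    show -(1 / 2 + τ / 2) + 1 + τ = 1 / 2 + τ / 2 by ring,
    show -π * I * (τ + 2 * (-(1 / 2 + τ / 2) + 1)) = -(π * I) by ring,
    Complex.exp_neg, Complex.exp_pi_mul_I] at h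
  linear_combination h / 2

lemma theta1_zero (τ : ℂ) : theta1 τ 0 = 0 := by
  rw [theta1_eq_jacobiTheta₂, zero_add, jacobiTheta₂_half_add_half_eq_zero, mul_zero, neg_zero]

lemma HasDerivAt.tendsto_div_of_eq_zero {𝕜 : Type*} [NontriviallyNormedField 𝕜]
    {f g : 𝕜 → 𝕜} {f' g' a : 𝕜} (hf : HasDerivAt f f' a) (hg : HasDerivAt g g' a)
    (hfa : f a = 0) (hga : g a = 0) (hf' : f' ≠ 0) :
    Tendsto (fun t => g t / f t) (𝓝[≠] a) (𝓝 (g' / f')) := by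
  refine ((hasDerivAt_iff_tendsto_slope.mp hg).div (hasDerivAt_iff_tendsto_slope.mp hf)
    hf').congr' ?_
  filter_upwards [self_mem_nhdsWithin] with t hta
  have ht : t - a ≠ 0 := sub_ne_zero.mpr hta
  simp only [Pi.div_apply, slope_def_field, hfa, hga, sub_zero]
  field_simp

section
variable {f : ℂ → ℂ} {w : ℂ}

lemma deriv_add_logDeriv_mul_eq {t c : ℂ} (hft : DifferentiableAt ℂ f t)
    (hfwt : DifferentiableAt ℂ f (w - t)) (hw : f w ≠ 0) (ht : f t ≠ 0) :
    deriv (fun s => f (w - s) * c / (f w * f s)) t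
        + (logDeriv f t + logDeriv f w) * (f (w - t) * c / (f w * f t))
      = c / f w ^ 2 * ((deriv f w * f (w - t) - deriv f (w - t) * f w) / f t) := by
  have hnum : HasDerivAt (fun s => f (w - s) * c) (-deriv f (w - t) * c) t := by
    simpa using ((hfwt.hasDerivAt.comp t ((hasDerivAt_id t).const_sub w)).mul_const c)
  have hquot : HasDerivAt (fun s => f (w - s) * c / (f w * f s))
      ((-deriv f (w - t) * c * (f w * f t) - f (w - t) * c * (f w * deriv f t))
        / (f w * f t) ^ 2) t :=
    hnum.div (hft.hasDerivAt.const_mul (f w)) (mul_ne_zero hw ht)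
  rw [hquot.deriv, logDeriv_apply, logDeriv_apply]
  field_simp
  ring

lemma tendsto_wronskian_div (hf : Differentiable ℂ f) (hf0 : f 0 = 0) (hf'0 : deriv f 0 ≠ 0) :
    Tendsto (fun t => (deriv f w * f (w - t) - deriv f (w - t) * f w) / f t) (𝓝[≠] 0)
      (𝓝 ((deriv (deriv f) w * f w - deriv f w ^ 2) / deriv f 0)) := by
  have hsub : HasDerivAt (fun s : ℂ => w - s) (-1) 0 := by
    simpa using (hasDerivAt_id (0 : ℂ)).const_sub w
  have hf_w := (hf (w - 0)).hasDerivAt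
  have hf'_w := (hf.deriv (w - 0)).hasDerivAt
  have hnum := ((hf_w.comp 0 hsub).const_mul (deriv f w)).sub
    ((hf'_w.comp 0 hsub).mul_const (f w))
  refine HasDerivAt.tendsto_div_of_eq_zero (hf 0).hasDerivAt (hnum.congr_deriv ?_) hf0 ?_ hf'0
  · simp only [sub_zero]; ring
  · simp only [sub_zero]; ring

end

/-- `J_w(t) = ∂_t σ(w,t) + (ρ(t)+ρ(w))·σ(w,t)` is regular at `t = 0`. -/
theorem Jw_regular_at_zero (τ : ℂ) (hτ : 0 < τ.im) (h0 : theta1' τ 0 ≠ 0)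
    (w : ℂ) (hw : theta1 τ w ≠ 0) :
    ∃ c : ℂ, Filter.Tendsto
      (fun t : ℂ => deriv (fun s => sigma τ w s) t + (rho τ t + rho τ w) * sigma τ w t)
      (nhdsWithin 0 {(0 : ℂ)}ᶜ) (nhds c) := by
  have hθ := differentiable_theta1 hτ
  refine ⟨_, ((tendsto_wronskian_div (w := w) hθ (theta1_zero τ) h0).const_mul
    (theta1' τ 0 / theta1 τ w ^ 2)).congr' ?_⟩
  filter_upwards [(hθ 0).hasDerivAt.eventually_ne h0 (c := 0)] with t ht
  exact (deriv_add_logDeriv_mul_eq (hθ t) (hθ (w - t)) hw ht).symm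
end

section
/- Fix w, t ∈ ℂ with sin(πw) ≠ 0 and sin(πt) ≠ 0. Then the elliptic function σ degenerates to its trigonometric limit as τ → i∞: the function τ ↦ σ_τ(w,t) tends to π·sin(π(w−t))/(sin(πw)·sin(πt)) along the filter of τ ∈ ℂ with Im τ → +∞ (in Lean, Tendsto along Filter.comap Complex.im Filter.atTop). -/
/-!
Pulling the factor `-e^{πiτ/4}` out of `θ₁` leaves
`∑ₙ e^{πi(2n+1)(t+1/2)} e^{πi n(n+1) τ}`, and this factor cancels in `σ`. Since `n(n+1) > 0`
unless `n ∈ {0, -1}`, as `Im τ → ∞` only those two terms survive, locally uniformly in `t`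
(dominated convergence), and they add up to `-2 sin πt`. By Weierstrass' theorem the
`t`-derivatives converge as well, to `-2π cos πt`, so `σ` tends to
`(-2 sin π(w-t))(-2π) / ((-2 sin πw)(-2 sin πt))`.
-/

open Complex

open Filter Topology Real

lemma mul_add_one_nonneg (n : ℤ) : 0 ≤ n * (n + 1) := by
  rcases le_or_gt 0 n with h | h <;> nlinarith

lemma mul_add_one_pos {n : ℤ} (h0 : n ≠ 0) (h1 : n ≠ -1) : 0 < n * (n + 1) := by
  rcases lt_or_gt_of_ne h0 with h | h
  · nlinarith [show n ≤ -2 by omega]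
  · positivity

lemma exp_neg_pi_mul_mul_le_of_one_le {k : ℤ} (hk : 0 ≤ k) {y : ℝ} (hy : 1 ≤ y) :
    rexp (-(π * k * y)) ≤ rexp (-(π * k)) :=
  Real.exp_le_exp.2 (neg_le_neg (le_mul_of_one_le_right (by positivity) hy))

lemma norm_cexp_pi_mul_I_mul_intCast_mul (k : ℤ) (τ : ℂ) :
    ‖cexp (π * I * k * τ)‖ = rexp (-(π * k * τ.im)) := by
  rw [Complex.norm_exp]
  congr 1
  simp [mul_re, mul_im]

lemma tendsto_tsum_compl_mul_exp_neg_pi_mul_atTop {B : ℤ → ℝ}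
    (hB : Summable fun n : ℤ => B n * rexp (-(π * (n * (n + 1) : ℤ)))) :
    Tendsto (fun y => ∑' n : ↑(({0, -1} : Finset ℤ) : Set ℤ)ᶜ,
      B n * rexp (-(π * (n * (n + 1) : ℤ) * y))) atTop (𝓝 0) := by
  have := tendsto_tsum_of_dominated_convergence (𝓕 := atTop) (g := fun _ => (0 : ℝ))
    (f := fun y (n : ↑(({0, -1} : Finset ℤ) : Set ℤ)ᶜ) => B n * rexp (-(π * (n * (n + 1) : ℤ) * y)))
    (hB.norm.subtype _) (fun n => ?_) ?_
  · simpa only [tsum_zero] using this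
  · have hn : (0 : ℝ) < (n * (n + 1) : ℤ) := by
      have := n.2
      simp only [Finset.coe_insert, Finset.coe_singleton, Set.mem_compl_iff,
        Set.mem_insert_iff, Set.mem_singleton_iff, not_or] at this
      exact_mod_cast mul_add_one_pos this.1 this.2
    simpa using (Real.tendsto_exp_neg_atTop_nhds_zero.comp
      (tendsto_id.const_mul_atTop (mul_pos pi_pos hn))).const_mul (B n)
  · filter_upwards [eventually_ge_atTop 1] with y hy n
    simp only [norm_mul, Real.norm_eq_abs, Real.abs_exp]
    exact mul_le_mul_of_nonneg_left (exp_neg_pi_mul_mul_le_of_one_le (mul_add_one_nonneg n) hy)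
      (abs_nonneg _)

theorem tendstoUniformlyOn_tsum_mul_cexp_atImInfty {s : Set ℂ} {b : ℤ → ℂ → ℂ} {B : ℤ → ℝ}
    (hB : Summable fun n : ℤ => B n * rexp (-(π * (n * (n + 1) : ℤ))))
    (hb : ∀ n, ∀ t ∈ s, ‖b n t‖ ≤ B n) :
    TendstoUniformlyOn (fun τ t => ∑' n : ℤ, b n t * cexp (π * I * (n * (n + 1) : ℤ) * τ))
      (fun t => b 0 t + b (-1) t) (comap im atTop) s := by
  set Z : Finset ℤ := {0, -1}
  set tail : ℝ → ℝ := fun y =>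
    ∑' n : ↑(Z : Set ℤ)ᶜ, B n * rexp (-(π * (n * (n + 1) : ℤ) * y))
  have htail : Tendsto tail atTop (𝓝 0) := tendsto_tsum_compl_mul_exp_neg_pi_mul_atTop hB
  have hle : ∀ τ : ℂ, 1 ≤ τ.im → ∀ t ∈ s,
      ‖∑' n : ℤ, b n t * cexp (π * I * (n * (n + 1) : ℤ) * τ) - (b 0 t + b (-1) t)‖ ≤
        tail τ.im := by
    intro τ hτ t ht
    have hB0 : ∀ n, 0 ≤ B n := fun n => (norm_nonneg _).trans (hb n t ht)
    have hnorm : ∀ n : ℤ, ‖b n t * cexp (π * I * (n * (n + 1) : ℤ) * τ)‖ ≤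
        B n * rexp (-(π * (n * (n + 1) : ℤ) * τ.im)) := fun n => by
      rw [norm_mul, norm_cexp_pi_mul_I_mul_intCast_mul]
      exact mul_le_mul_of_nonneg_right (hb n t ht) (Real.exp_nonneg _)
    have hdom : Summable fun n : ℤ => B n * rexp (-(π * (n * (n + 1) : ℤ) * τ.im)) :=
      hB.of_nonneg_of_le (fun n => mul_nonneg (hB0 n) (Real.exp_nonneg _)) fun n =>
        mul_le_mul_of_nonneg_left
          (exp_neg_pi_mul_mul_le_of_one_le (mul_add_one_nonneg n) hτ) (hB0 n)
    have hf := hdom.of_norm_bounded hnorm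
    rw [← hf.sum_add_tsum_compl (s := Z), Finset.sum_pair (by norm_num)]
    simp only [Int.reduceNeg, Int.reduceAdd, mul_zero, zero_mul, Int.cast_zero, Complex.exp_zero,
      mul_one, add_sub_cancel_left]
    exact tsum_of_norm_bounded (hdom.subtype _).hasSum fun n => hnorm n
  rw [Metric.tendstoUniformlyOn_iff]
  intro ε hε
  have him : Tendsto im (comap im atTop) atTop := tendsto_comap
  filter_upwards [(htail.comp him).eventually (gt_mem_nhds hε),
    him.eventually (eventually_ge_atTop 1)]
    with τ hτε hτ t ht
  rw [dist_comm, dist_eq_norm]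
  exact (hle τ hτ t ht).trans_lt hτε

lemma norm_cexp_pi_I_mul_le_of_abs_im_le {n : ℤ} {R : ℝ} {t : ℂ} (ht : |t.im| ≤ R) :
    ‖cexp (π * I * (2 * n + 1) * (t + 1 / 2))‖ ≤ rexp (π * R * (2 * |(n : ℝ)| + 1)) := by
  have hre : (π * I * (2 * n + 1) * (t + 1 / 2)).re = -(π * (2 * n + 1) * t.im) := by
    simp [mul_re, mul_im]
  have habs : |2 * (n : ℝ) + 1| ≤ 2 * |(n : ℝ)| + 1 := by
    simpa [abs_mul] using abs_add_le (2 * (n : ℝ)) 1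
  have hbound : -((2 * n + 1) * t.im) ≤ R * (2 * |(n : ℝ)| + 1) := calc
    _ ≤ |2 * (n : ℝ) + 1| * |t.im| := by rw [← abs_mul]; exact neg_le_abs _
    _ ≤ (2 * |(n : ℝ)| + 1) * R := mul_le_mul habs ht (abs_nonneg _) (by positivity)
    _ = _ := mul_comm _ _
  rw [Complex.norm_exp, Real.exp_le_exp, hre]
  nlinarith [mul_le_mul_of_nonneg_left hbound pi_pos.le]

lemma summable_exp_mul_exp_neg_pi_mul_add_one (R : ℝ) :
    Summable fun n : ℤ => rexp (π * R * (2 * |(n : ℝ)| + 1)) * rexp (-(π * (n * (n + 1) : ℤ))) := by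
  refine ((summable_pow_mul_jacobiTheta₂_term_bound (R + 1 / 2) one_pos 0).mul_left
    (rexp (π * R))).of_nonneg_of_le (fun n => by positivity) fun n => ?_
  rw [pow_zero, one_mul, ← Real.exp_add, ← Real.exp_add, Real.exp_le_exp]
  push_cast
  nlinarith [pi_pos, neg_abs_le (n : ℝ)]

lemma cexp_add_cexp_neg_eq_neg_two_mul_sin (t : ℂ) :
    cexp (π * I * (t + 1 / 2)) + cexp (-(π * I * (t + 1 / 2))) = -2 * Complex.sin (π * t) := by
  rw [← neg_neg (Complex.sin _), ← Complex.cos_add_pi_div_two, mul_neg, neg_mul, neg_neg,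
    Complex.two_cos]
  congr 2 <;> ring

noncomputable def theta1Reduced (τ t : ℂ) : ℂ :=
  ∑' n : ℤ, cexp (π * I * (2 * n + 1) * (t + 1 / 2)) * cexp (π * I * (n * (n + 1) : ℤ) * τ)

lemma theta1_eq_neg_cexp_mul_theta1Reduced (τ t : ℂ) :
    theta1 τ t = -(cexp (π * I * τ / 4) * theta1Reduced τ t) := by
  rw [theta1, theta1Reduced, ← tsum_mul_left]
  congr 1
  refine tsum_congr fun n => ?_
  rw [← Complex.exp_add, ← Complex.exp_add]
  congr 1
  push_cast
  ring

lemma theta1Reduced_eq_cexp_mul_jacobiTheta₂ (τ t : ℂ) :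
    theta1Reduced τ t = cexp (π * I * (t + 1 / 2)) * jacobiTheta₂ (t + 1 / 2 + τ / 2) τ := by
  rw [theta1Reduced, jacobiTheta₂, ← tsum_mul_left]
  refine tsum_congr fun n => ?_
  rw [jacobiTheta₂_term, ← Complex.exp_add, ← Complex.exp_add]
  congr 1
  push_cast
  ring

lemma differentiable_theta1Reduced {τ : ℂ} (hτ : 0 < τ.im) :
    Differentiable ℂ (theta1Reduced τ) := by
  intro t
  simp_rw [funext (theta1Reduced_eq_cexp_mul_jacobiTheta₂ τ)]
  exact ((differentiableAt_id.add_const _).const_mul _).cexp.mul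
    ((differentiableAt_jacobiTheta₂_fst _ hτ).comp t
      ((differentiableAt_id.add_const _).add_const _))

lemma sigma_eq_theta1Reduced (τ w t : ℂ) :
    sigma τ w t = theta1Reduced τ (w - t) * deriv (theta1Reduced τ) 0 /
      (theta1Reduced τ w * theta1Reduced τ t) := by
  have hθ : theta1 τ = fun t => -cexp (π * I * τ / 4) * theta1Reduced τ t := by
    funext t; rw [theta1_eq_neg_cexp_mul_theta1Reduced, neg_mul]
  have hc : cexp (π * I * τ / 4) ≠ 0 := Complex.exp_ne_zero _
  rw [sigma, theta1', hθ, deriv_const_mul_field']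
  field_simp

theorem tendstoUniformlyOn_theta1Reduced_of_abs_im_le (R : ℝ) :
    TendstoUniformlyOn theta1Reduced (fun t => -2 * Complex.sin (π * t)) (comap im atTop)
      {t | |t.im| ≤ R} := by
  refine (tendstoUniformlyOn_tsum_mul_cexp_atImInfty
    (b := fun n t => cexp (π * I * (2 * n + 1) * (t + 1 / 2)))
    (summable_exp_mul_exp_neg_pi_mul_add_one R)
    fun n t ht => norm_cexp_pi_I_mul_le_of_abs_im_le ht).congr_right fun t _ => ?_
  rw [← cexp_add_cexp_neg_eq_neg_two_mul_sin]
  push_cast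
  ring_nf

theorem tendstoLocallyUniformly_theta1Reduced :
    TendstoLocallyUniformly theta1Reduced (fun t => -2 * Complex.sin (π * t)) (comap im atTop) := by
  rw [tendstoLocallyUniformly_iff_forall_isCompact]
  intro K hK
  obtain ⟨R, hR⟩ := hK.isBounded.exists_norm_le
  exact (tendstoUniformlyOn_theta1Reduced_of_abs_im_le R).mono fun t ht =>
    (abs_im_le_norm t).trans (hR t ht)

theorem tendsto_theta1Reduced (t : ℂ) :
    Tendsto (fun τ => theta1Reduced τ t) (comap im atTop) (𝓝 (-2 * Complex.sin (π * t))) :=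
  (tendstoLocallyUniformlyOn_univ.2 tendstoLocallyUniformly_theta1Reduced).tendsto_at
    (Set.mem_univ t)

theorem tendsto_deriv_theta1Reduced (t : ℂ) :
    Tendsto (fun τ => deriv (theta1Reduced τ) t) (comap im atTop)
      (𝓝 (-2 * π * Complex.cos (π * t))) := by
  have hdiff : ∀ᶠ τ in comap im atTop, DifferentiableOn ℂ (theta1Reduced τ) Set.univ :=
    (tendsto_comap.eventually (eventually_gt_atTop 0)).mono fun τ hτ =>
      (differentiable_theta1Reduced hτ).differentiableOn
  have hsin : HasDerivAt (fun t => -2 * Complex.sin (π * t)) (-2 * π * Complex.cos (π * t)) t := by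
    have := (((hasDerivAt_id t).const_mul (π : ℂ)).csin).const_mul (-2 : ℂ)
    simp only [id, mul_one] at this
    exact this.congr_deriv (by ring)
  rw [← hsin.deriv]
  exact ((tendstoLocallyUniformlyOn_univ.2 tendstoLocallyUniformly_theta1Reduced).deriv hdiff
    isOpen_univ).tendsto_at (Set.mem_univ t)

/-- trigonometric limit of `σ` as `Im τ → +∞`. -/
theorem sigma_trigonometric_limit (w t : ℂ)
    (hw : Complex.sin ((Real.pi : ℂ) * w) ≠ 0)
    (ht : Complex.sin ((Real.pi : ℂ) * t) ≠ 0) :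
    Filter.Tendsto (fun τ : ℂ => sigma τ w t)
      (Filter.comap Complex.im Filter.atTop)
      (nhds ((Real.pi : ℂ) * Complex.sin ((Real.pi : ℂ) * (w - t)) /
        (Complex.sin ((Real.pi : ℂ) * w) * Complex.sin ((Real.pi : ℂ) * t)))) := by
  have hlim := ((tendsto_theta1Reduced (w - t)).mul (tendsto_deriv_theta1Reduced 0)).div
    ((tendsto_theta1Reduced w).mul (tendsto_theta1Reduced t)) (by simp [hw, ht])
  have hval : -2 * Complex.sin (π * (w - t)) * (-2 * π * Complex.cos (π * 0)) /
      (-2 * Complex.sin (π * w) * (-2 * Complex.sin (π * t))) =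
      π * Complex.sin (π * (w - t)) / (Complex.sin (π * w) * Complex.sin (π * t)) := by
    rw [mul_zero, Complex.cos_zero]
    field_simp
  simp_rw [sigma_eq_theta1Reduced, ← hval]
  exact hlim
end

section
/- For every τ in the upper half-plane, γ ∈ ℂ, z ∈ ℂ and λ ∈ ℂ^N, with η = γ/2, the elliptic R-matrix satisfies the quasi-periodicity R(z+τ,λ) = exp(−4πiη)·exp(2πi(ηC₀ + λ^{(1)}))·R(z,λ)·exp(2πi(ηC₀ − λ^{(1)})), where C₀ = ∑_i E_{ii}⊗E_{ii} and λ^{(1)} = ∑_i λ_i·E_{ii}⊗1 are diagonal matrices, so the conjugating factors are the diagonal matrices with entry exp(2πi(η·δ_{ij} ± λ_i)) at position (i,j) (the identity holds unconditionally, using Lean's convention that division by zero is zero). -/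
open Complex

open Matrix Kronecker

/-- The matrix unit `E_{ij}`. -/
noncomputable def Em {N : ℕ} (i j : Fin N) : Matrix (Fin N) (Fin N) ℂ :=
  Matrix.single i j 1

/-- The elliptic dynamical R-matrix
`R(z,λ) = ∑_i E_{ii}⊗E_{ii} + ∑_{i≠j} (σ(γ,λ_{ij})/σ(γ,z))·E_{ii}⊗E_{jj}
        + ∑_{i≠j} (σ(λ_{ij},z)/σ(γ,z))·E_{ij}⊗E_{ji}`. -/
noncomputable def Rmat (τ γ : ℂ) {N : ℕ} (z : ℂ) (lam : Fin N → ℂ) :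
    Matrix (Fin N × Fin N) (Fin N × Fin N) ℂ :=
  (∑ i : Fin N, Em i i ⊗ₖ Em i i) +
  (∑ i : Fin N, ∑ j : Fin N,
    (if i = j then 0 else sigma τ γ (lam i - lam j) / sigma τ γ z) • (Em i i ⊗ₖ Em j j)) +
  (∑ i : Fin N, ∑ j : Fin N,
    (if i = j then 0 else sigma τ (lam i - lam j) z / sigma τ γ z) • (Em i j ⊗ₖ Em j i))

/-- The flip matrix `P_{(i,j),(k,l)} = δ_{il}·δ_{jk}`. -/
def Pflip (N : ℕ) : Matrix (Fin N × Fin N) (Fin N × Fin N) ℂ :=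
  Matrix.of fun p q => if p.1 = q.2 ∧ p.2 = q.1 then 1 else 0

/-!
Shifting `t ↦ t + τ` in the theta series is undone by reindexing `j ↦ j + 1`, which gives
`θ₁(t + τ) = -e^{-πiτ - 2πit} θ₁(t)` and hence `σ(w, z + τ) = e^{2πiw} σ(w, z)`.
The nonzero entries of `R(z, λ)` at `((a, b), (c, d))` are `1` (for `a = b = c = d`),
`σ(γ, λ_ab)/σ(γ, z)` (for `(c, d) = (a, b)`, `a ≠ b`) and `σ(λ_ab, z)/σ(γ, z)`
(for `(c, d) = (b, a)`, `a ≠ b`), so `z ↦ z + τ` multiplies them by `1`, `e^{-2πiγ}` and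
`e^{2πi(λ_ab - γ)}` respectively. In each case this is the factor
`e^{-4πiη} e^{2πi(η δ_ab + λ_a)} e^{2πi(η δ_cd - λ_c)}` produced by the scalar and the two
diagonal matrices.
-/

lemma theta1_add_period (τ t : ℂ) :
    theta1 τ (t + τ) =
      -Complex.exp (-(Real.pi * Complex.I * τ) - 2 * Real.pi * Complex.I * t) * theta1 τ t := by
  set f : ℤ → ℂ := fun j => Complex.exp ((Real.pi : ℂ) * Complex.I * ((j : ℂ) + 1/2)^2 * τ +
      2 * (Real.pi : ℂ) * Complex.I * ((j : ℂ) + 1/2) * (t + 1/2)) with hf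
  have shift (j : ℤ) : Complex.exp ((Real.pi : ℂ) * Complex.I * ((j : ℂ) + 1/2)^2 * τ +
      2 * (Real.pi : ℂ) * Complex.I * ((j : ℂ) + 1/2) * ((t + τ) + 1/2)) =
      -Complex.exp (-(Real.pi * Complex.I * τ) - 2 * Real.pi * Complex.I * t) * f (j + 1) := by
    rw [← neg_one_mul, ← Complex.exp_neg_pi_mul_I, hf, ← Complex.exp_add, ← Complex.exp_add]
    congr 1
    push_cast
    ring
  -- Reindexing by a bijection of `ℤ` needs no convergence argument.
  have reindex : ∑' j : ℤ, f (j + 1) = ∑' j, f j := (Equiv.addRight 1).tsum_eq f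
  rw [theta1, theta1, tsum_congr shift, tsum_mul_left, reindex, ← hf]
  ring

lemma theta1_sub_period (τ t : ℂ) :
    theta1 τ (t - τ) =
      -Complex.exp (-(Real.pi * Complex.I * τ) + 2 * Real.pi * Complex.I * t) * theta1 τ t := by
  rw [← sub_add_cancel t τ, theta1_add_period, add_sub_cancel_right, ← mul_assoc, neg_mul_neg,
    ← Complex.exp_add]
  ring_nf
  rw [Complex.exp_zero, one_mul]

lemma sigma_add_period (τ w z : ℂ) :
    sigma τ w (z + τ) = Complex.exp (2 * Real.pi * Complex.I * w) * sigma τ w z := by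
  have hexp : Complex.exp (-(Real.pi * Complex.I * τ) + 2 * Real.pi * Complex.I * (w - z)) =
      Complex.exp (2 * Real.pi * Complex.I * w) *
        Complex.exp (-(Real.pi * Complex.I * τ) - 2 * Real.pi * Complex.I * z) := by
    rw [← Complex.exp_add]; ring_nf
  rw [sigma, sigma, show w - (z + τ) = (w - z) - τ by ring, theta1_sub_period, theta1_add_period,
    hexp]
  field_simp

lemma Rmat_apply (τ γ : ℂ) {N : ℕ} (z : ℂ) (lam : Fin N → ℂ) (a b c d : Fin N) :
    Rmat τ γ z lam (a, b) (c, d) =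
      (if a = b ∧ b = c ∧ c = d then 1 else 0) +
      (if a = c ∧ b = d ∧ a ≠ b then sigma τ γ (lam a - lam b) / sigma τ γ z else 0) +
      (if a = d ∧ b = c ∧ a ≠ b then sigma τ (lam a - lam b) z / sigma τ γ z else 0) := by
  simp only [Rmat, Em, single_kronecker_single, mul_one, smul_single, smul_eq_mul,
    Matrix.add_apply, Matrix.sum_apply, Matrix.single_apply, Prod.mk.injEq, ite_and,
    Finset.sum_ite_irrel, Finset.sum_const_zero, Finset.sum_ite_eq', Finset.mem_univ, if_true]
  split_ifs <;> simp_all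

lemma Rmat_add_period_apply (τ γ : ℂ) {N : ℕ} (z : ℂ) (lam : Fin N → ℂ) (a b c d : Fin N) :
    Rmat τ γ (z + τ) lam (a, b) (c, d) =
      Complex.exp (2 * Real.pi * Complex.I * (-γ + (γ / 2 * (if a = b then 1 else 0) + lam a) +
          (γ / 2 * (if c = d then 1 else 0) - lam c))) * Rmat τ γ z lam (a, b) (c, d) := by
  rw [Rmat_apply, Rmat_apply, sigma_add_period, sigma_add_period]
  split_ifs <;> simp_all
  · rw [← Complex.exp_zero]
    ring_nf
  · rw [Complex.exp_neg]
    field_simp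
  · rw [show 2 * Real.pi * Complex.I * (-γ + lam d + -lam c) =
        2 * Real.pi * Complex.I * (lam d - lam c) - 2 * Real.pi * Complex.I * γ by ring,
      Complex.exp_sub]
    field_simp

theorem Rmat_quasi_periodic_general (τ : ℂ) (γ : ℂ) (N : ℕ)
    (z : ℂ) (lam : Fin N → ℂ) :
    Rmat τ γ (z + τ) lam =
      Complex.exp (-(4 * (Real.pi : ℂ) * Complex.I * (γ / 2))) •
      (Matrix.diagonal (fun p : Fin N × Fin N =>
          Complex.exp (2 * (Real.pi : ℂ) * Complex.I *
            ((γ / 2) * (if p.1 = p.2 then 1 else 0) + lam p.1))) *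
        Rmat τ γ z lam *
        Matrix.diagonal (fun p : Fin N × Fin N =>
          Complex.exp (2 * (Real.pi : ℂ) * Complex.I *
            ((γ / 2) * (if p.1 = p.2 then 1 else 0) - lam p.1)))) := by
  ext ⟨a, b⟩ ⟨c, d⟩
  rw [Rmat_add_period_apply, Matrix.smul_apply, Matrix.mul_diagonal, Matrix.diagonal_mul,
    smul_eq_mul, mul_add, mul_add, Complex.exp_add, Complex.exp_add,
    show -(4 * (Real.pi : ℂ) * Complex.I * (γ / 2)) = 2 * Real.pi * Complex.I * -γ by ring]
  ring

/-- quasi-periodicity of the elliptic R-matrix under `z ↦ z + τ`,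
with `η = γ/2`:
`R(z+τ,λ) = e^{−4πiη}·exp(2πi(ηC₀+λ^{(1)}))·R(z,λ)·exp(2πi(ηC₀−λ^{(1)}))`. -/
theorem Rmat_quasi_periodic (τ : ℂ) (hτ : 0 < τ.im) (γ : ℂ) (N : ℕ) (hN : 2 ≤ N)
    (z : ℂ) (lam : Fin N → ℂ) :
    Rmat τ γ (z + τ) lam =
      Complex.exp (-(4 * (Real.pi : ℂ) * Complex.I * (γ / 2))) •
      (Matrix.diagonal (fun p : Fin N × Fin N =>
          Complex.exp (2 * (Real.pi : ℂ) * Complex.I *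
            ((γ / 2) * (if p.1 = p.2 then 1 else 0) + lam p.1))) *
        Rmat τ γ z lam *
        Matrix.diagonal (fun p : Fin N × Fin N =>
          Complex.exp (2 * (Real.pi : ℂ) * Complex.I *
            ((γ / 2) * (if p.1 = p.2 then 1 else 0) - lam p.1)))) :=
  Rmat_quasi_periodic_general τ γ N z lam
end

section
/- Let R be a generalized quantum R-matrix and let (J, w, L) and (J', w', L') be representations of A(R). Define w'' : J×J' → ℂ^N by w''(m,m') = w(m) + w'(m'), and define L''(z,λ), a matrix indexed by Fin N × (J×J'), by L''(z,λ) = L^{(12)}(z, λ+ηh^{(3)})·L'^{(13)}(z, λ−ηh^{(2)}), a product of matrices indexed by Fin N × J × J' (factor 1 is the auxiliary Fin N, factor 2 carries J, factor 3 carries J'; the shift h^{(3)} is by the weight w' of the column index in J' and h^{(2)} by the weight w of the column index in J). Then (J×J', w'', L'') is again a representation of A(R): L'' is of weight zero and satisfies the RLL relation with respect to R. -/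
open Matrix

/-- The `k`-th standard basis vector `ε_k` of `ℂ^N`. -/
def eps {N : ℕ} (k : Fin N) : Fin N → ℂ := Pi.single k 1

/-- `R^{(12)}(z, λ + c·h^{(3)})`: `R` acting on the first two of three `Fin N`
tensor factors, with dynamical shift by the weight `ε` of the third column index. -/
def sh12 {N : ℕ} (R : ℂ → (Fin N → ℂ) → Matrix (Fin N × Fin N) (Fin N × Fin N) ℂ)
    (c z : ℂ) (lam : Fin N → ℂ) :
    Matrix (Fin N × Fin N × Fin N) (Fin N × Fin N × Fin N) ℂ :=
  Matrix.of fun p q =>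
    if p.2.2 = q.2.2 then R z (lam + c • eps q.2.2) (p.1, p.2.1) (q.1, q.2.1) else 0

/-- `R^{(13)}(z, λ + c·h^{(2)})`. -/
def sh13 {N : ℕ} (R : ℂ → (Fin N → ℂ) → Matrix (Fin N × Fin N) (Fin N × Fin N) ℂ)
    (c z : ℂ) (lam : Fin N → ℂ) :
    Matrix (Fin N × Fin N × Fin N) (Fin N × Fin N × Fin N) ℂ :=
  Matrix.of fun p q =>
    if p.2.1 = q.2.1 then R z (lam + c • eps q.2.1) (p.1, p.2.2) (q.1, q.2.2) else 0

/-- `R^{(23)}(z, λ + c·h^{(1)})`. -/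
def sh23 {N : ℕ} (R : ℂ → (Fin N → ℂ) → Matrix (Fin N × Fin N) (Fin N × Fin N) ℂ)
    (c z : ℂ) (lam : Fin N → ℂ) :
    Matrix (Fin N × Fin N × Fin N) (Fin N × Fin N × Fin N) ℂ :=
  Matrix.of fun p q =>
    if p.1 = q.1 then R z (lam + c • eps q.1) (p.2.1, p.2.2) (q.2.1, q.2.2) else 0

/-- A generalized quantum R-matrix: weight zero, unitarity, and the modified
(dynamical) Yang–Baxter equation. -/
def IsGQR (N : ℕ) (η : ℂ)
    (R : ℂ → (Fin N → ℂ) → Matrix (Fin N × Fin N) (Fin N × Fin N) ℂ) : Prop :=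
  (∀ (z : ℂ) (lam : Fin N → ℂ) (i j k l : Fin N),
      eps i + eps j ≠ eps k + eps l → R z lam (i, j) (k, l) = 0) ∧
  (∀ (z : ℂ) (lam : Fin N → ℂ), R z lam * Pflip N * R (-z) lam * Pflip N = 1) ∧
  (∀ (z₁ z₂ z₃ : ℂ) (lam : Fin N → ℂ),
      sh12 R η (z₁ - z₂) lam * sh13 R (-η) (z₁ - z₃) lam * sh23 R η (z₂ - z₃) lam =
      sh23 R (-η) (z₂ - z₃) lam * sh13 R η (z₁ - z₃) lam * sh12 R (-η) (z₁ - z₂) lam)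

/-- `R^{(12)}(z₁−z₂, λ + c·h^{(3)})` on `Fin N × Fin N × J`, where the dynamical
shift is by the weight `w` of the `J`-column index. -/
def rll12 {N : ℕ} (R : ℂ → (Fin N → ℂ) → Matrix (Fin N × Fin N) (Fin N × Fin N) ℂ)
    {J : Type} [DecidableEq J] (w : J → Fin N → ℂ) (c z : ℂ) (lam : Fin N → ℂ) :
    Matrix (Fin N × Fin N × J) (Fin N × Fin N × J) ℂ :=
  Matrix.of fun p q =>
    if p.2.2 = q.2.2 then R z (lam + c • w q.2.2) (p.1, p.2.1) (q.1, q.2.1) else 0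

/-- `L^{(13)}(z, λ + c·h^{(2)})` on `Fin N × Fin N × J`. -/
def rll13 {N : ℕ} {J : Type}
    (L : ℂ → (Fin N → ℂ) → Matrix (Fin N × J) (Fin N × J) ℂ)
    (c z : ℂ) (lam : Fin N → ℂ) :
    Matrix (Fin N × Fin N × J) (Fin N × Fin N × J) ℂ :=
  Matrix.of fun p q =>
    if p.2.1 = q.2.1 then L z (lam + c • eps q.2.1) (p.1, p.2.2) (q.1, q.2.2) else 0

/-- `L^{(23)}(z, λ + c·h^{(1)})` on `Fin N × Fin N × J`. -/
def rll23 {N : ℕ} {J : Type}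
    (L : ℂ → (Fin N → ℂ) → Matrix (Fin N × J) (Fin N × J) ℂ)
    (c z : ℂ) (lam : Fin N → ℂ) :
    Matrix (Fin N × Fin N × J) (Fin N × Fin N × J) ℂ :=
  Matrix.of fun p q =>
    if p.1 = q.1 then L z (lam + c • eps q.1) (p.2.1, p.2.2) (q.2.1, q.2.2) else 0

/-- A representation of `A(R)`: a finite type `J` with weight map `w` and an
`L`-operator of weight zero satisfying the `RLL` relation. -/
def IsRep (N : ℕ) (η : ℂ)
    (R : ℂ → (Fin N → ℂ) → Matrix (Fin N × Fin N) (Fin N × Fin N) ℂ)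
    (J : Type) [Fintype J] [DecidableEq J] (w : J → Fin N → ℂ)
    (L : ℂ → (Fin N → ℂ) → Matrix (Fin N × J) (Fin N × J) ℂ) : Prop :=
  (∀ (z : ℂ) (lam : Fin N → ℂ) (i k : Fin N) (m p : J),
      eps i + w m ≠ eps k + w p → L z lam (i, m) (k, p) = 0) ∧
  (∀ (z₁ z₂ : ℂ) (lam : Fin N → ℂ),
      rll12 R w η (z₁ - z₂) lam * rll13 L (-η) z₁ lam * rll23 L η z₂ lam =
      rll23 L (-η) z₂ lam * rll13 L η z₁ lam * rll12 R w (-η) (z₁ - z₂) lam)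

/-- The tensor-product (coproduct) `L`-operator
`L''(z,λ) = L^{(12)}(z, λ+ηh^{(3)})·L'^{(13)}(z, λ−ηh^{(2)})`
on `Fin N × J × J'`. -/
noncomputable def coL {N : ℕ} (η : ℂ) {J J' : Type}
    [Fintype J] [Fintype J'] [DecidableEq J] [DecidableEq J']
    (w : J → Fin N → ℂ) (w' : J' → Fin N → ℂ)
    (L : ℂ → (Fin N → ℂ) → Matrix (Fin N × J) (Fin N × J) ℂ)
    (L' : ℂ → (Fin N → ℂ) → Matrix (Fin N × J') (Fin N × J') ℂ)
    (z : ℂ) (lam : Fin N → ℂ) : Matrix (Fin N × J × J') (Fin N × J × J') ℂ :=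
  (Matrix.of fun p q =>
    if p.2.2 = q.2.2 then L z (lam + η • w' q.2.2) (p.1, p.2.1) (q.1, q.2.1) else 0) *
  (Matrix.of fun p q =>
    if p.2.1 = q.2.1 then L' z (lam - η • w q.2.1) (p.1, p.2.2) (q.1, q.2.2) else 0)


set_option linter.unusedSectionVars false
set_option maxHeartbeats 1000000

section TensorAux

variable {N : ℕ} {J J' : Type} [Fintype J] [Fintype J'] [DecidableEq J] [DecidableEq J']

/-- `R` on factors 1,2 with dynamical shift `a·h3 + b·h4`. -/
def mR12 (R : ℂ → (Fin N → ℂ) → Matrix (Fin N × Fin N) (Fin N × Fin N) ℂ)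
    (w : J → Fin N → ℂ) (w' : J' → Fin N → ℂ) (a b z : ℂ) (lam : Fin N → ℂ) :
    Matrix (Fin N × Fin N × J × J') (Fin N × Fin N × J × J') ℂ :=
  Matrix.of fun p q =>
    if p.2.2 = q.2.2 then R z (lam + a • w q.2.2.1 + b • w' q.2.2.2) (p.1, p.2.1) (q.1, q.2.1)
    else 0

/-- `L` on factors 1,3 with dynamical shift `a·h2 + b·h4`. -/
def mL13 (L : ℂ → (Fin N → ℂ) → Matrix (Fin N × J) (Fin N × J) ℂ)
    (w' : J' → Fin N → ℂ) (a b z : ℂ) (lam : Fin N → ℂ) :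
    Matrix (Fin N × Fin N × J × J') (Fin N × Fin N × J × J') ℂ :=
  Matrix.of fun p q =>
    if p.2.1 = q.2.1 ∧ p.2.2.2 = q.2.2.2 then
      L z (lam + a • eps q.2.1 + b • w' q.2.2.2) (p.1, p.2.2.1) (q.1, q.2.2.1)
    else 0

/-- `L'` on factors 1,4 with dynamical shift `a·h2 + b·h3`. -/
def mL14 (L' : ℂ → (Fin N → ℂ) → Matrix (Fin N × J') (Fin N × J') ℂ)
    (w : J → Fin N → ℂ) (a b z : ℂ) (lam : Fin N → ℂ) :
    Matrix (Fin N × Fin N × J × J') (Fin N × Fin N × J × J') ℂ :=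
  Matrix.of fun p q =>
    if p.2.1 = q.2.1 ∧ p.2.2.1 = q.2.2.1 then
      L' z (lam + a • eps q.2.1 + b • w q.2.2.1) (p.1, p.2.2.2) (q.1, q.2.2.2)
    else 0

/-- `L` on factors 2,3 with dynamical shift `a·h1 + b·h4`. -/
def mL23 (L : ℂ → (Fin N → ℂ) → Matrix (Fin N × J) (Fin N × J) ℂ)
    (w' : J' → Fin N → ℂ) (a b z : ℂ) (lam : Fin N → ℂ) :
    Matrix (Fin N × Fin N × J × J') (Fin N × Fin N × J × J') ℂ :=
  Matrix.of fun p q =>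
    if p.1 = q.1 ∧ p.2.2.2 = q.2.2.2 then
      L z (lam + a • eps q.1 + b • w' q.2.2.2) (p.2.1, p.2.2.1) (q.2.1, q.2.2.1)
    else 0

/-- `L'` on factors 2,4 with dynamical shift `a·h1 + b·h3`. -/
def mL24 (L' : ℂ → (Fin N → ℂ) → Matrix (Fin N × J') (Fin N × J') ℂ)
    (w : J → Fin N → ℂ) (a b z : ℂ) (lam : Fin N → ℂ) :
    Matrix (Fin N × Fin N × J × J') (Fin N × Fin N × J × J') ℂ :=
  Matrix.of fun p q =>
    if p.1 = q.1 ∧ p.2.2.1 = q.2.2.1 then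
      L' z (lam + a • eps q.1 + b • w q.2.2.1) (p.2.1, p.2.2.2) (q.2.1, q.2.2.2)
    else 0

/-- Lift of a `J'`-indexed family of matrices on factors 1,2,3. -/
def lift4 (F : J' → Matrix (Fin N × Fin N × J) (Fin N × Fin N × J) ℂ) :
    Matrix (Fin N × Fin N × J × J') (Fin N × Fin N × J × J') ℂ :=
  Matrix.of fun p q =>
    if p.2.2.2 = q.2.2.2 then F q.2.2.2 (p.1, p.2.1, p.2.2.1) (q.1, q.2.1, q.2.2.1) else 0

/-- Lift of a `J`-indexed family of matrices on factors 1,2,4. -/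
def lift3 (F : J → Matrix (Fin N × Fin N × J') (Fin N × Fin N × J') ℂ) :
    Matrix (Fin N × Fin N × J × J') (Fin N × Fin N × J × J') ℂ :=
  Matrix.of fun p q =>
    if p.2.2.1 = q.2.2.1 then F q.2.2.1 (p.1, p.2.1, p.2.2.2) (q.1, q.2.1, q.2.2.2) else 0

lemma lift4_mul (F G : J' → Matrix (Fin N × Fin N × J) (Fin N × Fin N × J) ℂ) :
    lift4 F * lift4 G = lift4 (fun n => F n * G n) := by
  ext p q
  by_cases hpq : p.2.2.2 = q.2.2.2
  · simp only [lift4, Matrix.mul_apply, Matrix.of_apply, hpq, if_pos,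
      Fintype.sum_prod_type, ite_mul, mul_ite, zero_mul, mul_zero]
    simp [Finset.sum_ite_eq, Finset.sum_ite_eq', hpq]
  · simp only [lift4, Matrix.mul_apply, Matrix.of_apply, hpq, if_false]
    apply Finset.sum_eq_zero
    intro r _
    by_cases h1 : p.2.2.2 = r.2.2.2
    · have h2 : ¬ (r.2.2.2 = q.2.2.2) := fun h => hpq (h1.trans h)
      simp [h2]
    · simp [h1]

lemma lift3_mul (F G : J → Matrix (Fin N × Fin N × J') (Fin N × Fin N × J') ℂ) :
    lift3 F * lift3 G = lift3 (fun n => F n * G n) := by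
  ext p q
  by_cases hpq : p.2.2.1 = q.2.2.1
  · simp only [lift3, Matrix.mul_apply, Matrix.of_apply, hpq, if_pos,
      Fintype.sum_prod_type, ite_mul, mul_ite, zero_mul, mul_zero]
    simp [Finset.sum_ite_eq, Finset.sum_ite_eq', hpq]
  · simp only [lift3, Matrix.mul_apply, Matrix.of_apply, hpq, if_false]
    apply Finset.sum_eq_zero
    intro r _
    by_cases h1 : p.2.2.1 = r.2.2.1
    · have h2 : ¬ (r.2.2.1 = q.2.2.1) := fun h => hpq (h1.trans h)
      simp [h2]
    · simp [h1]

lemma abel_fix (lam x y : Fin N → ℂ) : lam + x + y = lam + y + x := by abel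

lemma mR12_lift4 (R : ℂ → (Fin N → ℂ) → Matrix (Fin N × Fin N) (Fin N × Fin N) ℂ)
    (w : J → Fin N → ℂ) (w' : J' → Fin N → ℂ) (a b z : ℂ) (lam : Fin N → ℂ) :
    mR12 R w w' a b z lam = lift4 (fun n => rll12 R w a z (lam + b • w' n)) := by
  ext p q
  by_cases h3 : p.2.2.1 = q.2.2.1 <;> by_cases h4 : p.2.2.2 = q.2.2.2 <;>
    simp [mR12, lift4, rll12, Prod.ext_iff, h3, h4, abel_fix]

lemma mL13_lift4 (L : ℂ → (Fin N → ℂ) → Matrix (Fin N × J) (Fin N × J) ℂ)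
    (w' : J' → Fin N → ℂ) (a b z : ℂ) (lam : Fin N → ℂ) :
    mL13 L w' a b z lam = lift4 (fun n => rll13 L a z (lam + b • w' n)) := by
  ext p q
  by_cases h2 : p.2.1 = q.2.1 <;> by_cases h4 : p.2.2.2 = q.2.2.2 <;>
    simp [mL13, lift4, rll13, h2, h4, abel_fix]

lemma mL23_lift4 (L : ℂ → (Fin N → ℂ) → Matrix (Fin N × J) (Fin N × J) ℂ)
    (w' : J' → Fin N → ℂ) (a b z : ℂ) (lam : Fin N → ℂ) :
    mL23 L w' a b z lam = lift4 (fun n => rll23 L a z (lam + b • w' n)) := by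
  ext p q
  by_cases h1 : p.1 = q.1 <;> by_cases h4 : p.2.2.2 = q.2.2.2 <;>
    simp [mL23, lift4, rll23, h1, h4, abel_fix]

lemma mR12_lift3 (R : ℂ → (Fin N → ℂ) → Matrix (Fin N × Fin N) (Fin N × Fin N) ℂ)
    (w : J → Fin N → ℂ) (w' : J' → Fin N → ℂ) (a b z : ℂ) (lam : Fin N → ℂ) :
    mR12 R w w' a b z lam = lift3 (fun n => rll12 R w' b z (lam + a • w n)) := by
  ext p q
  by_cases h3 : p.2.2.1 = q.2.2.1 <;> by_cases h4 : p.2.2.2 = q.2.2.2 <;>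
    simp [mR12, lift3, rll12, Prod.ext_iff, h3, h4, add_assoc]

lemma mL14_lift3 (L' : ℂ → (Fin N → ℂ) → Matrix (Fin N × J') (Fin N × J') ℂ)
    (w : J → Fin N → ℂ) (a b z : ℂ) (lam : Fin N → ℂ) :
    mL14 L' w a b z lam = lift3 (fun n => rll13 L' a z (lam + b • w n)) := by
  ext p q
  by_cases h2 : p.2.1 = q.2.1 <;> by_cases h3 : p.2.2.1 = q.2.2.1 <;>
    simp [mL14, lift3, rll13, h2, h3, abel_fix]

lemma mL24_lift3 (L' : ℂ → (Fin N → ℂ) → Matrix (Fin N × J') (Fin N × J') ℂ)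
    (w : J → Fin N → ℂ) (a b z : ℂ) (lam : Fin N → ℂ) :
    mL24 L' w a b z lam = lift3 (fun n => rll23 L' a z (lam + b • w n)) := by
  ext p q
  by_cases h1 : p.1 = q.1 <;> by_cases h3 : p.2.2.1 = q.2.2.1 <;>
    simp [mL24, lift3, rll23, h1, h3, abel_fix]

end TensorAux

section TensorAux2

set_option linter.unusedSectionVars false

variable {N : ℕ} {J J' : Type} [Fintype J] [Fintype J'] [DecidableEq J] [DecidableEq J']
variable {w : J → Fin N → ℂ} {w' : J' → Fin N → ℂ}
  {L : ℂ → (Fin N → ℂ) → Matrix (Fin N × J) (Fin N × J) ℂ}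
  {L' : ℂ → (Fin N → ℂ) → Matrix (Fin N × J') (Fin N × J') ℂ}

lemma collapse_14_23 (a a' b b' z1 z2 : ℂ) (lam : Fin N → ℂ)
    (p q : Fin N × Fin N × J × J') :
    (mL14 L' w a a' z1 lam * mL23 L w' b b' z2 lam) p q =
      L' z1 (lam + a • eps p.2.1 + a' • w p.2.2.1) (p.1, p.2.2.2) (q.1, q.2.2.2) *
      L z2 (lam + b • eps q.1 + b' • w' q.2.2.2) (p.2.1, p.2.2.1) (q.2.1, q.2.2.1) := by
  rw [Matrix.mul_apply,
    Finset.sum_eq_single ((q.1, p.2.1, p.2.2.1, q.2.2.2) : Fin N × Fin N × J × J')]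
  · simp [mL14, mL23]
  · intro r _ hr
    obtain ⟨r1, r2, r3, r4⟩ := r
    simp only [mL14, mL23, Matrix.of_apply]
    rcases eq_or_ne p.2.1 r2 with h2 | h2; swap; · simp [h2]
    rcases eq_or_ne p.2.2.1 r3 with h3 | h3; swap; · simp [h3]
    rcases eq_or_ne r1 q.1 with h1 | h1; swap; · simp [h1]
    rcases eq_or_ne r4 q.2.2.2 with h4 | h4; swap; · simp [h4]
    exact absurd (by subst h1 h2 h3 h4; rfl) hr
  · intro h; exact absurd (Finset.mem_univ _) h

lemma collapse_23_14 (a a' b b' z1 z2 : ℂ) (lam : Fin N → ℂ)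
    (p q : Fin N × Fin N × J × J') :
    (mL23 L w' b b' z2 lam * mL14 L' w a a' z1 lam) p q =
      L z2 (lam + b • eps p.1 + b' • w' p.2.2.2) (p.2.1, p.2.2.1) (q.2.1, q.2.2.1) *
      L' z1 (lam + a • eps q.2.1 + a' • w q.2.2.1) (p.1, p.2.2.2) (q.1, q.2.2.2) := by
  rw [Matrix.mul_apply,
    Finset.sum_eq_single ((p.1, q.2.1, q.2.2.1, p.2.2.2) : Fin N × Fin N × J × J')]
  · simp [mL14, mL23]
  · intro r _ hr
    obtain ⟨r1, r2, r3, r4⟩ := r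
    simp only [mL14, mL23, Matrix.of_apply]
    rcases eq_or_ne p.1 r1 with h1 | h1; swap; · simp [h1]
    rcases eq_or_ne p.2.2.2 r4 with h4 | h4; swap; · simp [h4]
    rcases eq_or_ne r2 q.2.1 with h2 | h2; swap; · simp [h2]
    rcases eq_or_ne r3 q.2.2.1 with h3 | h3; swap; · simp [h3]
    exact absurd (by subst h1 h2 h3 h4; rfl) hr
  · intro h; exact absurd (Finset.mem_univ _) h

lemma comm_14_23 (a b z1 z2 : ℂ) (lam : Fin N → ℂ)
    (hLw : ∀ (z : ℂ) (lam : Fin N → ℂ) (i k : Fin N) (m p : J),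
      eps i + w m ≠ eps k + w p → L z lam (i, m) (k, p) = 0)
    (hL'w : ∀ (z : ℂ) (lam : Fin N → ℂ) (i k : Fin N) (m p : J'),
      eps i + w' m ≠ eps k + w' p → L' z lam (i, m) (k, p) = 0) :
    mL14 L' w a a z1 lam * mL23 L w' b b z2 lam =
      mL23 L w' b b z2 lam * mL14 L' w a a z1 lam := by
  ext p q
  rw [collapse_14_23, collapse_23_14]
  by_cases hA : eps p.1 + w' p.2.2.2 = eps q.1 + w' q.2.2.2
  · by_cases hB : eps p.2.1 + w p.2.2.1 = eps q.2.1 + w q.2.2.1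
    · rw [show lam + a • eps p.2.1 + a • w p.2.2.1 = lam + a • eps q.2.1 + a • w q.2.2.1 by
        rw [add_assoc, add_assoc, ← smul_add, ← smul_add, hB],
        show lam + b • eps q.1 + b • w' q.2.2.2 = lam + b • eps p.1 + b • w' p.2.2.2 by
        rw [add_assoc, add_assoc, ← smul_add, ← smul_add, hA],
        mul_comm]
    · rw [hLw z2 _ _ _ _ _ hB, hLw z2 _ _ _ _ _ hB, mul_zero, zero_mul]
  · rw [hL'w z1 _ _ _ _ _ hA, hL'w z1 _ _ _ _ _ hA, mul_zero, zero_mul]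

lemma collapse_13_24 (a a' b b' z1 z2 : ℂ) (lam : Fin N → ℂ)
    (p q : Fin N × Fin N × J × J') :
    (mL13 L w' a a' z1 lam * mL24 L' w b b' z2 lam) p q =
      L z1 (lam + a • eps p.2.1 + a' • w' p.2.2.2) (p.1, p.2.2.1) (q.1, q.2.2.1) *
      L' z2 (lam + b • eps q.1 + b' • w q.2.2.1) (p.2.1, p.2.2.2) (q.2.1, q.2.2.2) := by
  rw [Matrix.mul_apply,
    Finset.sum_eq_single ((q.1, p.2.1, q.2.2.1, p.2.2.2) : Fin N × Fin N × J × J')]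
  · simp [mL13, mL24]
  · intro r _ hr
    obtain ⟨r1, r2, r3, r4⟩ := r
    simp only [mL13, mL24, Matrix.of_apply]
    rcases eq_or_ne p.2.1 r2 with h2 | h2; swap; · simp [h2]
    rcases eq_or_ne p.2.2.2 r4 with h4 | h4; swap; · simp [h4]
    rcases eq_or_ne r1 q.1 with h1 | h1; swap; · simp [h1]
    rcases eq_or_ne r3 q.2.2.1 with h3 | h3; swap; · simp [h3]
    exact absurd (by subst h1 h2 h3 h4; rfl) hr
  · intro h; exact absurd (Finset.mem_univ _) h

lemma collapse_24_13 (a a' b b' z1 z2 : ℂ) (lam : Fin N → ℂ)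
    (p q : Fin N × Fin N × J × J') :
    (mL24 L' w b b' z2 lam * mL13 L w' a a' z1 lam) p q =
      L' z2 (lam + b • eps p.1 + b' • w p.2.2.1) (p.2.1, p.2.2.2) (q.2.1, q.2.2.2) *
      L z1 (lam + a • eps q.2.1 + a' • w' q.2.2.2) (p.1, p.2.2.1) (q.1, q.2.2.1) := by
  rw [Matrix.mul_apply,
    Finset.sum_eq_single ((p.1, q.2.1, p.2.2.1, q.2.2.2) : Fin N × Fin N × J × J')]
  · simp [mL13, mL24]
  · intro r _ hr
    obtain ⟨r1, r2, r3, r4⟩ := r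
    simp only [mL13, mL24, Matrix.of_apply]
    rcases eq_or_ne p.1 r1 with h1 | h1; swap; · simp [h1]
    rcases eq_or_ne p.2.2.1 r3 with h3 | h3; swap; · simp [h3]
    rcases eq_or_ne r2 q.2.1 with h2 | h2; swap; · simp [h2]
    rcases eq_or_ne r4 q.2.2.2 with h4 | h4; swap; · simp [h4]
    exact absurd (by subst h1 h2 h3 h4; rfl) hr
  · intro h; exact absurd (Finset.mem_univ _) h

lemma comm_13_24 (a b z1 z2 : ℂ) (lam : Fin N → ℂ)
    (hLw : ∀ (z : ℂ) (lam : Fin N → ℂ) (i k : Fin N) (m p : J),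
      eps i + w m ≠ eps k + w p → L z lam (i, m) (k, p) = 0)
    (hL'w : ∀ (z : ℂ) (lam : Fin N → ℂ) (i k : Fin N) (m p : J'),
      eps i + w' m ≠ eps k + w' p → L' z lam (i, m) (k, p) = 0) :
    mL13 L w' a a z1 lam * mL24 L' w b b z2 lam =
      mL24 L' w b b z2 lam * mL13 L w' a a z1 lam := by
  ext p q
  rw [collapse_13_24, collapse_24_13]
  by_cases hA : eps p.1 + w p.2.2.1 = eps q.1 + w q.2.2.1
  · by_cases hB : eps p.2.1 + w' p.2.2.2 = eps q.2.1 + w' q.2.2.2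
    · rw [show lam + a • eps p.2.1 + a • w' p.2.2.2 = lam + a • eps q.2.1 + a • w' q.2.2.2 by
        rw [add_assoc, add_assoc, ← smul_add, ← smul_add, hB],
        show lam + b • eps q.1 + b • w q.2.2.1 = lam + b • eps p.1 + b • w p.2.2.1 by
        rw [add_assoc, add_assoc, ← smul_add, ← smul_add, hA],
        mul_comm]
    · rw [hL'w z2 _ _ _ _ _ hB, hL'w z2 _ _ _ _ _ hB, mul_zero, zero_mul]
  · rw [hLw z1 _ _ _ _ _ hA, hLw z1 _ _ _ _ _ hA, mul_zero, zero_mul]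

end TensorAux2

section TensorAux3
set_option linter.unusedSectionVars false
variable {N : ℕ} {J J' : Type} [Fintype J] [Fintype J'] [DecidableEq J] [DecidableEq J']
variable {w : J → Fin N → ℂ} {w' : J' → Fin N → ℂ}
  {L : ℂ → (Fin N → ℂ) → Matrix (Fin N × J) (Fin N × J) ℂ}
  {L' : ℂ → (Fin N → ℂ) → Matrix (Fin N × J') (Fin N × J') ℂ}

lemma rll12_tensor (R : ℂ → (Fin N → ℂ) → Matrix (Fin N × Fin N) (Fin N × Fin N) ℂ)
    (c z : ℂ) (lam : Fin N → ℂ) :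
    rll12 R (fun m : J × J' => w m.1 + w' m.2) c z lam = mR12 R w w' c c z lam := by
  ext p q
  by_cases h : p.2.2 = q.2.2 <;> simp [rll12, mR12, h, smul_add, add_assoc]

lemma rll13_coL (et c z : ℂ) (lam : Fin N → ℂ) :
    rll13 (coL et w w' L L') c z lam = mL13 L w' c et z lam * mL14 L' w c (-et) z lam := by
  ext p q
  by_cases h2 : p.2.1 = q.2.1
  · simp only [rll13, Matrix.of_apply, if_pos h2, coL, Matrix.mul_apply, mL13, mL14,
      Fintype.sum_prod_type, ite_and, mul_ite, ite_mul, zero_mul, mul_zero,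
      Finset.sum_ite_eq, Finset.sum_ite_eq', Finset.mem_univ, if_true, h2,
      Finset.sum_ite_irrel, Finset.sum_const_zero, sub_eq_add_neg, neg_smul]
  · simp only [rll13, Matrix.of_apply, if_neg h2, Matrix.mul_apply, mL13, mL14,
      Matrix.of_apply]
    symm
    apply Finset.sum_eq_zero
    intro r _
    by_cases ha : p.2.1 = r.2.1
    · have : ¬ (r.2.1 = q.2.1) := fun hb => h2 (ha.trans hb)
      simp [this]
    · simp [ha]

lemma rll23_coL (et c z : ℂ) (lam : Fin N → ℂ) :
    rll23 (coL et w w' L L') c z lam = mL23 L w' c et z lam * mL24 L' w c (-et) z lam := by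
  ext p q
  by_cases h1 : p.1 = q.1
  · simp only [rll23, Matrix.of_apply, if_pos h1, coL, Matrix.mul_apply, mL23, mL24,
      Fintype.sum_prod_type, ite_and, mul_ite, ite_mul, zero_mul, mul_zero,
      Finset.sum_ite_eq, Finset.sum_ite_eq', Finset.mem_univ, if_true, h1,
      Finset.sum_ite_irrel, Finset.sum_const_zero, sub_eq_add_neg, neg_smul]
  · simp only [rll23, Matrix.of_apply, if_neg h1, Matrix.mul_apply, mL23, mL24,
      Matrix.of_apply]
    symm
    apply Finset.sum_eq_zero
    intro r _
    by_cases ha : p.1 = r.1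
    · have : ¬ (r.1 = q.1) := fun hb => h1 (ha.trans hb)
      simp [this]
    · simp [ha]

end TensorAux3

section TensorAux4
set_option linter.unusedSectionVars false
variable {N : ℕ} {J J' : Type} [Fintype J] [Fintype J'] [DecidableEq J] [DecidableEq J']
variable {w : J → Fin N → ℂ} {w' : J' → Fin N → ℂ}
  {L : ℂ → (Fin N → ℂ) → Matrix (Fin N × J) (Fin N × J) ℂ}
  {L' : ℂ → (Fin N → ℂ) → Matrix (Fin N × J') (Fin N × J') ℂ}
  {R : ℂ → (Fin N → ℂ) → Matrix (Fin N × Fin N) (Fin N × Fin N) ℂ} {η : ℂ}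

lemma liftedRLL_L
    (hRLL : ∀ (z₁ z₂ : ℂ) (lam : Fin N → ℂ),
      rll12 R w η (z₁ - z₂) lam * rll13 L (-η) z₁ lam * rll23 L η z₂ lam =
        rll23 L (-η) z₂ lam * rll13 L η z₁ lam * rll12 R w (-η) (z₁ - z₂) lam)
    (b z1 z2 : ℂ) (lam : Fin N → ℂ) :
    mR12 R w w' η b (z1 - z2) lam * mL13 L w' (-η) b z1 lam * mL23 L w' η b z2 lam =
      mL23 L w' (-η) b z2 lam * mL13 L w' η b z1 lam *
        mR12 R w w' (-η) b (z1 - z2) lam := by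
  rw [mR12_lift4, mL13_lift4, mL23_lift4, mL23_lift4 (a := -η), mL13_lift4 (a := η),
    mR12_lift4 (a := -η), lift4_mul, lift4_mul, lift4_mul, lift4_mul]
  exact congrArg lift4 (funext fun n => hRLL z1 z2 (lam + b • w' n))

lemma liftedRLL_L'
    (hRLL' : ∀ (z₁ z₂ : ℂ) (lam : Fin N → ℂ),
      rll12 R w' η (z₁ - z₂) lam * rll13 L' (-η) z₁ lam * rll23 L' η z₂ lam =
        rll23 L' (-η) z₂ lam * rll13 L' η z₁ lam * rll12 R w' (-η) (z₁ - z₂) lam)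
    (a z1 z2 : ℂ) (lam : Fin N → ℂ) :
    mR12 R w w' a η (z1 - z2) lam * mL14 L' w (-η) a z1 lam * mL24 L' w η a z2 lam =
      mL24 L' w (-η) a z2 lam * mL14 L' w η a z1 lam *
        mR12 R w w' a (-η) (z1 - z2) lam := by
  rw [mR12_lift3, mL14_lift3, mL24_lift3, mL24_lift3 (a := -η), mL14_lift3 (a := η),
    mR12_lift3 (b := -η), lift3_mul, lift3_mul, lift3_mul, lift3_mul]
  exact congrArg lift3 (funext fun n => hRLL' z1 z2 (lam + a • w n))

lemma chain_assoc {M : Type*} [Monoid M] {r1 r2 r3 b1 b2 c1 c2 d1 d2 e1 e2 : M}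
    (h1 : c1 * d1 = d1 * c1) (h2 : r1 * b1 * d1 = d2 * b2 * r2)
    (h3 : r2 * c1 * e1 = e2 * c2 * r3) (h4 : b2 * e2 = e2 * b2) :
    r1 * (b1 * c1) * (d1 * e1) = d2 * e2 * (b2 * c2) * r3 := by
  calc r1 * (b1 * c1) * (d1 * e1)
      = r1 * (b1 * (c1 * (d1 * e1))) := by simp only [mul_assoc]
    _ = r1 * (b1 * (d1 * (c1 * e1))) := by rw [← mul_assoc c1 d1, h1, mul_assoc]
    _ = r1 * b1 * d1 * (c1 * e1) := by simp only [mul_assoc]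
    _ = d2 * b2 * r2 * (c1 * e1) := by rw [h2]
    _ = d2 * (b2 * (r2 * c1 * e1)) := by simp only [mul_assoc]
    _ = d2 * (b2 * (e2 * (c2 * r3))) := by rw [h3]; simp only [mul_assoc]
    _ = d2 * (b2 * e2 * (c2 * r3)) := by simp only [mul_assoc]
    _ = d2 * (e2 * (b2 * (c2 * r3))) := by rw [h4]; simp only [mul_assoc]
    _ = d2 * e2 * (b2 * c2) * r3 := by simp only [mul_assoc]

end TensorAux4

/-- the tensor product of two representations of `A(R)` is again
a representation of `A(R)`. -/
theorem tensor_product_of_representations (N : ℕ) (hN : 1 ≤ N) (η : ℂ)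
    (R : ℂ → (Fin N → ℂ) → Matrix (Fin N × Fin N) (Fin N × Fin N) ℂ)
    (hR : IsGQR N η R)
    (J J' : Type) [Fintype J] [Fintype J'] [DecidableEq J] [DecidableEq J']
    (w : J → Fin N → ℂ) (w' : J' → Fin N → ℂ)
    (L : ℂ → (Fin N → ℂ) → Matrix (Fin N × J) (Fin N × J) ℂ)
    (L' : ℂ → (Fin N → ℂ) → Matrix (Fin N × J') (Fin N × J') ℂ)
    (hL : IsRep N η R J w L) (hL' : IsRep N η R J' w' L') :
    IsRep N η R (J × J') (fun m => w m.1 + w' m.2) (coL η w w' L L') := by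
  constructor
  · intro z lam i k m p hne
    obtain ⟨m1, m2⟩ := m
    obtain ⟨p1, p2⟩ := p
    simp only [coL, Matrix.mul_apply, Matrix.of_apply]
    apply Finset.sum_eq_zero
    intro r _
    obtain ⟨r1, r2, r3⟩ := r
    by_cases hd1 : m2 = r3; swap
    · simp [hd1]
    by_cases hd2 : r2 = p1; swap
    · simp [hd2]
    subst hd1 hd2
    by_cases hw1 : eps i + w m1 = eps r1 + w r2
    · have hw2 : eps r1 + w' m2 ≠ eps k + w' p2 := by
        intro hw2
        refine hne ?_
        show eps i + (w m1 + w' m2) = eps k + (w r2 + w' p2)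
        linear_combination hw1 + hw2
      simp [hL'.1 z (lam - η • w r2) r1 k m2 p2 hw2]
    · simp [hL.1 z (lam + η • w' m2) i r1 m1 r2 hw1]
  · intro z1 z2 lam
    rw [rll12_tensor, rll12_tensor, rll13_coL, rll13_coL, rll23_coL, rll23_coL]
    exact chain_assoc
      (comm_14_23 (-η) η z1 z2 lam hL.1 hL'.1)
      (liftedRLL_L hL.2 η z1 z2 lam)
      (liftedRLL_L' hL'.2 (-η) z1 z2 lam)
      (comm_13_24 η (-η) z1 z2 lam hL.1 hL'.1)
end

section
/- Let R be a generalized quantum R-matrix, and let (J, w, L), (J', w', L'), (J'', w'', L'') be three representations of A(R). Let Δ denote the tensor-product construction on representations, which sends a pair of representations to the representation on the product index set with added weights and L-operator L₁^{(12)}(z, λ+ηh^{(3)})·L₂^{(13)}(z, λ−ηh^{(2)}). Then the coproduct is coassociative: the representations Δ(Δ((J,w,L),(J',w',L')),(J'',w'',L'')) and Δ((J,w,L),Δ((J',w',L'),(J'',w'',L''))) have equal L-operators under the canonical bijection (J×J')×J'' ≅ J×(J'×J''); explicitly, both L-operators, viewed as matrices indexed by Fin N × J × J' × J'', equal L^{(12)}(z,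 λ+ηh^{(3)}+ηh^{(4)})·L'^{(13)}(z, λ−ηh^{(2)}+ηh^{(4)})·L''^{(14)}(z, λ−ηh^{(2)}−ηh^{(3)}). -/
open Matrix

/-- The explicit triple-coproduct `L`-operator
`L^{(12)}(z, λ+ηh^{(3)}+ηh^{(4)})·L'^{(13)}(z, λ−ηh^{(2)}+ηh^{(4)})·L''^{(14)}(z, λ−ηh^{(2)}−ηh^{(3)})`
on `Fin N × J × J' × J''`. -/
noncomputable def tripleL {N : ℕ} (η : ℂ) {J J' J'' : Type}
    [Fintype J] [Fintype J'] [Fintype J'']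
    [DecidableEq J] [DecidableEq J'] [DecidableEq J'']
    (w : J → Fin N → ℂ) (w' : J' → Fin N → ℂ) (w'' : J'' → Fin N → ℂ)
    (L : ℂ → (Fin N → ℂ) → Matrix (Fin N × J) (Fin N × J) ℂ)
    (L' : ℂ → (Fin N → ℂ) → Matrix (Fin N × J') (Fin N × J') ℂ)
    (L'' : ℂ → (Fin N → ℂ) → Matrix (Fin N × J'') (Fin N × J'') ℂ)
    (z : ℂ) (lam : Fin N → ℂ) :
    Matrix (Fin N × J × J' × J'') (Fin N × J × J' × J'') ℂ :=
  (Matrix.of fun p q =>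
    if p.2.2 = q.2.2 then
      L z (lam + η • w' q.2.2.1 + η • w'' q.2.2.2) (p.1, p.2.1) (q.1, q.2.1)
    else 0) *
  (Matrix.of fun p q =>
    if p.2.1 = q.2.1 ∧ p.2.2.2 = q.2.2.2 then
      L' z (lam - η • w q.2.1 + η • w'' q.2.2.2) (p.1, p.2.2.1) (q.1, q.2.2.1)
    else 0) *
  (Matrix.of fun p q =>
    if p.2.1 = q.2.1 ∧ p.2.2.1 = q.2.2.1 then
      L'' z (lam - η • w q.2.1 - η • w' q.2.2.1) (p.1, p.2.2.2) (q.1, q.2.2.2)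
    else 0)


lemma coL_apply {N : ℕ} (η : ℂ) {J J' : Type}
    [Fintype J] [Fintype J'] [DecidableEq J] [DecidableEq J']
    (w : J → Fin N → ℂ) (w' : J' → Fin N → ℂ)
    (L : ℂ → (Fin N → ℂ) → Matrix (Fin N × J) (Fin N × J) ℂ)
    (L' : ℂ → (Fin N → ℂ) → Matrix (Fin N × J') (Fin N × J') ℂ)
    (z : ℂ) (lam : Fin N → ℂ) (i k : Fin N) (m p : J) (m' p' : J') :
    coL η w w' L L' z lam (i, m, m') (k, p, p') =
      ∑ a : Fin N, L z (lam + η • w' m') (i, m) (a, p) *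
        L' z (lam - η • w p) (a, m') (k, p') := by
  simp [coL, Matrix.mul_apply, Fintype.sum_prod_type, ite_mul, mul_ite,
    Finset.sum_ite_eq, Finset.sum_ite_eq']

lemma tripleL_apply {N : ℕ} (η : ℂ) {J J' J'' : Type}
    [Fintype J] [Fintype J'] [Fintype J'']
    [DecidableEq J] [DecidableEq J'] [DecidableEq J'']
    (w : J → Fin N → ℂ) (w' : J' → Fin N → ℂ) (w'' : J'' → Fin N → ℂ)
    (L : ℂ → (Fin N → ℂ) → Matrix (Fin N × J) (Fin N × J) ℂ)
    (L' : ℂ → (Fin N → ℂ) → Matrix (Fin N × J') (Fin N × J') ℂ)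
    (L'' : ℂ → (Fin N → ℂ) → Matrix (Fin N × J'') (Fin N × J'') ℂ)
    (z : ℂ) (lam : Fin N → ℂ) (i k : Fin N) (m p : J) (m' p' : J') (m'' p'' : J'') :
    tripleL η w w' w'' L L' L'' z lam (i, m, m', m'') (k, p, p', p'') =
      ∑ a : Fin N, ∑ b : Fin N,
        L z (lam + η • w' m' + η • w'' m'') (i, m) (a, p) *
        L' z (lam - η • w p + η • w'' m'') (a, m') (b, p') *
        L'' z (lam - η • w p - η • w' p') (b, m'') (k, p'') := by
  simp [tripleL, Matrix.mul_apply, Fintype.sum_prod_type, ite_mul, mul_ite,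
    ite_and, Finset.sum_ite_eq, Finset.sum_ite_eq', Finset.mul_sum,
    Finset.sum_mul, mul_assoc]
  rw [Finset.sum_comm]

/-- coassociativity of the coproduct on representations of `A(R)`:
both iterated tensor products have (under the canonical bijection
`(J×J')×J'' ≃ J×(J'×J'')`) the same `L`-operator, equal to the explicit
triple-product formula. -/
theorem coproduct_coassociative (N : ℕ) (hN : 1 ≤ N) (η : ℂ)
    (R : ℂ → (Fin N → ℂ) → Matrix (Fin N × Fin N) (Fin N × Fin N) ℂ)
    (hR : IsGQR N η R)
    (J J' J'' : Type) [Fintype J] [Fintype J'] [Fintype J'']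
    [DecidableEq J] [DecidableEq J'] [DecidableEq J'']
    (w : J → Fin N → ℂ) (w' : J' → Fin N → ℂ) (w'' : J'' → Fin N → ℂ)
    (L : ℂ → (Fin N → ℂ) → Matrix (Fin N × J) (Fin N × J) ℂ)
    (L' : ℂ → (Fin N → ℂ) → Matrix (Fin N × J') (Fin N × J') ℂ)
    (L'' : ℂ → (Fin N → ℂ) → Matrix (Fin N × J'') (Fin N × J'') ℂ)
    (hL : IsRep N η R J w L) (hL' : IsRep N η R J' w' L')
    (hL'' : IsRep N η R J'' w'' L'') :
    (∀ (z : ℂ) (lam : Fin N → ℂ),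
      Matrix.reindex ((Equiv.refl (Fin N)).prodCongr (Equiv.prodAssoc J J' J''))
        ((Equiv.refl (Fin N)).prodCongr (Equiv.prodAssoc J J' J''))
        (coL η (fun m : J × J' => w m.1 + w' m.2) w''
          (coL η w w' L L') L'' z lam) =
      tripleL η w w' w'' L L' L'' z lam) ∧
    (∀ (z : ℂ) (lam : Fin N → ℂ),
      coL η w (fun m : J' × J'' => w' m.1 + w'' m.2)
        L (coL η w' w'' L' L'') z lam =
      tripleL η w w' w'' L L' L'' z lam) := by
  constructor
  · intro z lam
    ext ⟨i, m, m', m''⟩ ⟨k, p, p', p''⟩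
    simp only [Matrix.reindex_apply, Matrix.submatrix_apply,
      Equiv.prodCongr_symm, Equiv.prodCongr_apply, Equiv.refl_symm,
      Equiv.coe_refl, Prod.map_apply, id_eq, Equiv.prodAssoc_symm_apply]
    rw [coL_apply, tripleL_apply, Finset.sum_comm]
    simp only [coL_apply, Finset.sum_mul]
    refine Finset.sum_congr rfl fun a _ => Finset.sum_congr rfl fun b _ => ?_
    rw [smul_add η (w p), ← sub_sub, sub_add_eq_add_sub lam (η • w p) (η • w'' m''),
      add_right_comm lam (η • w'' m'') (η • w' m')]
  · intro z lam
    ext ⟨i, m, m', m''⟩ ⟨k, p, p', p''⟩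
    rw [coL_apply, tripleL_apply]
    simp only [coL_apply, Finset.mul_sum, smul_add]
    refine Finset.sum_congr rfl fun a _ => Finset.sum_congr rfl fun b _ => ?_
    rw [sub_add_eq_add_sub lam (η • w p)]
    ring
end

section
/- Let R be a generalized quantum R-matrix and n ≥ 2. On the space F of functions f : ℂⁿ × ℂ^N → ((Fin N)ⁿ → ℂ), define for 1 ≤ j ≤ n−1 the operator S_j by (S_j f)(z,λ) = R̂^{(j,j+1)}(z_j − z_{j+1}, λ − η∑_{i<j} h^{(i)} + η∑_{i>j+1} h^{(i)}) applied to the vector f(s_j z, λ), where s_j z is z with coordinates j and j+1 exchanged and R̂ = R·P with P the flip matrix. Then the S_j satisfy the defining relations of the symmetric group Sₙ: S_j∘S_j = id for all j; S_j∘S_{j+1}∘S_j = S_{j+1}∘S_j∘S_{j+1} for 1 ≤ j ≤ n−2; and S_j∘S_l = S_l∘S_j whenever |j−l| ≥ 2. Hence s_j ↦ S_j defines a representation of Sₙ on F. -/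
open Matrix

/-- The space `F` of functions `f : ℂⁿ × ℂ^N → ((Fin N)ⁿ → ℂ)`. -/
abbrev FSpace (n N : ℕ) : Type :=
  (Fin n → ℂ) → (Fin N → ℂ) → (Fin n → Fin N) → ℂ

/-- The operator `S_j` (for `j` with `j+1 < n`; identity for out-of-range `j`):
`(S_j f)(z,λ) = R̂^{(j,j+1)}(z_j − z_{j+1}, λ − η∑_{i<j} h^{(i)} + η∑_{i>j+1} h^{(i)})
f(s_j z, λ)`, where `R̂ = R·P`. -/
noncomputable def Sop {N : ℕ} (η : ℂ)
    (R : ℂ → (Fin N → ℂ) → Matrix (Fin N × Fin N) (Fin N × Fin N) ℂ)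
    (n : ℕ) (j : ℕ) (f : FSpace n N) : FSpace n N :=
  if hj : j + 1 < n then
    fun z lam k =>
      ∑ k' : Fin n → Fin N,
        (if ∀ i : Fin n, (i : ℕ) ≠ j → (i : ℕ) ≠ j + 1 → k i = k' i then
          R (z ⟨j, by omega⟩ - z ⟨j + 1, hj⟩)
            (lam - η • (∑ i ∈ Finset.univ.filter (fun i : Fin n => (i : ℕ) < j), eps (k' i))
                 + η • (∑ i ∈ Finset.univ.filter (fun i : Fin n => j + 1 < (i : ℕ)), eps (k' i)))
            (k ⟨j, by omega⟩, k ⟨j + 1, hj⟩) (k' ⟨j + 1, hj⟩, k' ⟨j, by omega⟩)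
         else 0) *
        f (z ∘ Equiv.swap (⟨j, by omega⟩ : Fin n) ⟨j + 1, hj⟩) lam k'
  else f

section Helpers

variable {n N : ℕ}

/-- Double update. -/
def U2 (k : Fin n → Fin N) (p q : Fin n) (a b : Fin N) : Fin n → Fin N :=
  Function.update (Function.update k p a) q b

/-- Triple update. -/
def U3 (k : Fin n → Fin N) (p q r : Fin n) (a b c : Fin N) : Fin n → Fin N :=
  Function.update (Function.update (Function.update k p a) q b) r c

lemma U2_apply (k : Fin n → Fin N) (p q : Fin n) (a b : Fin N) (i : Fin n) :
    U2 k p q a b i = if i = q then b else if i = p then a else k i := by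
  simp [U2, Function.update_apply]

lemma U3_apply (k : Fin n → Fin N) (p q r : Fin n) (a b c : Fin N) (i : Fin n) :
    U3 k p q r a b c i = if i = r then c else if i = q then b else if i = p then a else k i := by
  simp [U3, Function.update_apply]

lemma U2_fst (k : Fin n → Fin N) {p q : Fin n} (h : p ≠ q) (a b : Fin N) :
    U2 k p q a b p = a := by simp [U2_apply, h]

lemma U2_snd (k : Fin n → Fin N) (p q : Fin n) (a b : Fin N) :
    U2 k p q a b q = b := by simp [U2_apply]

lemma U2_other (k : Fin n → Fin N) {p q i : Fin n} (hp : i ≠ p) (hq : i ≠ q) (a b : Fin N) :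
    U2 k p q a b i = k i := by simp [U2_apply, hp, hq]

lemma U2_self (k : Fin n → Fin N) {p q : Fin n} (h : p ≠ q) :
    U2 k p q (k p) (k q) = k := by
  funext i
  rcases eq_or_ne i q with rfl | hq
  · simp [U2_apply]
  · rcases eq_or_ne i p with rfl | hp
    · simp [U2_apply, h, hq]
    · simp [U2_apply, hp, hq]

/-- The key reindexing lemma: a delta-constrained sum over functions becomes a
sum over the two free values. -/
lemma sum_delta (j l : ℕ) (hj : j < n) (hl : l < n) (hjl : j ≠ l)
    (k : Fin n → Fin N) (F : (Fin n → Fin N) → ℂ) :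
    (∑ k' : Fin n → Fin N,
      (if ∀ i : Fin n, (i : ℕ) ≠ j → (i : ℕ) ≠ l → k i = k' i then F k' else 0))
    = ∑ a : Fin N, ∑ b : Fin N, F (U2 k ⟨j, hj⟩ ⟨l, hl⟩ a b) := by
  classical
  rw [Finset.sum_ite, Finset.sum_const_zero, add_zero]
  have hrhs : (∑ ab : Fin N × Fin N, F (U2 k ⟨j, hj⟩ ⟨l, hl⟩ ab.1 ab.2))
      = ∑ a : Fin N, ∑ b : Fin N, F (U2 k ⟨j, hj⟩ ⟨l, hl⟩ a b) :=
    Fintype.sum_prod_type _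
  rw [← hrhs]
  have hne : (⟨j, hj⟩ : Fin n) ≠ ⟨l, hl⟩ := by simp only [ne_eq, Fin.mk.injEq]; omega
  have hleft : ∀ k' : Fin n → Fin N, (∀ i : Fin n, (i : ℕ) ≠ j → (i : ℕ) ≠ l → k i = k' i) →
      U2 k ⟨j, hj⟩ ⟨l, hl⟩ (k' ⟨j, hj⟩) (k' ⟨l, hl⟩) = k' := by
    intro k' hk'
    funext i
    rcases eq_or_ne i ⟨l, hl⟩ with rfl | hil
    · rw [U2_snd]
    · rcases eq_or_ne i ⟨j, hj⟩ with rfl | hij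
      · rw [U2_fst _ hne]
      · rw [U2_other k hij hil]
        exact hk' i (by simpa [Fin.ext_iff] using hij) (by simpa [Fin.ext_iff] using hil)
  refine Finset.sum_nbij' (fun k' => (k' ⟨j, hj⟩, k' ⟨l, hl⟩))
    (fun ab => U2 k ⟨j, hj⟩ ⟨l, hl⟩ ab.1 ab.2) (fun _ _ => Finset.mem_univ _)
    ?_ ?_ ?_ ?_
  · intro ab _
    simp only [Finset.mem_filter, Finset.mem_univ, true_and]
    intro i hij hil
    exact (U2_other k (by simp [Fin.ext_iff, hij]) (by simp [Fin.ext_iff, hil]) _ _).symm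
  · intro k' hk'
    simp only [Finset.mem_filter, Finset.mem_univ, true_and] at hk'
    exact hleft k' hk'
  · intro ab _
    simp only [U2_fst _ hne, U2_snd]
  · intro k' hk'
    simp only [Finset.mem_filter, Finset.mem_univ, true_and] at hk'
    rw [hleft k' hk']

end Helpers

section Wt

variable {n N : ℕ}

/-- The dynamical shift appearing in `Sop`. -/
noncomputable def Wt (η : ℂ) (lam : Fin N → ℂ) (j : ℕ) (k : Fin n → Fin N) : Fin N → ℂ :=
  lam - η • (∑ i ∈ Finset.univ.filter (fun i : Fin n => (i : ℕ) < j), eps (k i))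
      + η • (∑ i ∈ Finset.univ.filter (fun i : Fin n => j + 1 < (i : ℕ)), eps (k i))

lemma sum_eps_update_notMem {s : Finset (Fin n)} {p : Fin n} (hp : p ∉ s)
    (k : Fin n → Fin N) (a : Fin N) :
    ∑ i ∈ s, eps (Function.update k p a i) = ∑ i ∈ s, eps (k i) :=
  Finset.sum_congr rfl fun i hi => by
    rw [Function.update_of_ne (by rintro rfl; exact hp hi)]

lemma sum_eps_update_mem {s : Finset (Fin n)} {p : Fin n} (hp : p ∈ s)
    (k : Fin n → Fin N) (a : Fin N) :
    ∑ i ∈ s, eps (Function.update k p a i)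
      = ∑ i ∈ s, eps (k i) + eps a - eps (k p) := by
  classical
  rw [← Finset.add_sum_erase _ (fun i => eps (Function.update k p a i)) hp,
      ← Finset.add_sum_erase _ (fun i => eps (k i)) hp]
  rw [Function.update_self]
  have : (∑ i ∈ s.erase p, eps (Function.update k p a i)) = ∑ i ∈ s.erase p, eps (k i) :=
    Finset.sum_congr rfl fun i hi => by
      rw [Function.update_of_ne (Finset.ne_of_mem_erase hi)]
  rw [this]
  abel

/-- Updating at a position not interacting with the filters. -/
lemma Wt_update_mid (η : ℂ) (lam : Fin N → ℂ) (j : ℕ) (k : Fin n → Fin N)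
    {p : Fin n} (h1 : ¬ (p : ℕ) < j) (h2 : ¬ j + 1 < (p : ℕ)) (a : Fin N) :
    Wt η lam j (Function.update k p a) = Wt η lam j k := by
  unfold Wt
  rw [sum_eps_update_notMem (by simp [h1]), sum_eps_update_notMem (by simp [h2])]

lemma Wt_update_lt (η : ℂ) (lam : Fin N → ℂ) (j : ℕ) (k : Fin n → Fin N)
    {p : Fin n} (h1 : (p : ℕ) < j) (a : Fin N) :
    Wt η lam j (Function.update k p a)
      = Wt η lam j k - η • eps a + η • eps (k p) := by
  unfold Wt
  rw [sum_eps_update_mem (s := Finset.univ.filter (fun i : Fin n => (i : ℕ) < j))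
        (by simp [h1]) k a,
      sum_eps_update_notMem (s := Finset.univ.filter (fun i : Fin n => j + 1 < (i : ℕ)))
        (by simp; omega) k a]
  simp only [smul_add, smul_sub]
  abel

lemma Wt_update_gt (η : ℂ) (lam : Fin N → ℂ) (j : ℕ) (k : Fin n → Fin N)
    {p : Fin n} (h2 : j + 1 < (p : ℕ)) (a : Fin N) :
    Wt η lam j (Function.update k p a)
      = Wt η lam j k + η • eps a - η • eps (k p) := by
  unfold Wt
  rw [sum_eps_update_notMem (s := Finset.univ.filter (fun i : Fin n => (i : ℕ) < j))
        (by simp; omega) k a,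
      sum_eps_update_mem (s := Finset.univ.filter (fun i : Fin n => j + 1 < (i : ℕ)))
        (by simp [h2]) k a]
  simp only [smul_add, smul_sub]
  abel

lemma filter_lt_succ (j : ℕ) (hj : j < n) :
    Finset.univ.filter (fun i : Fin n => (i : ℕ) < j + 1)
      = insert ⟨j, hj⟩ (Finset.univ.filter (fun i : Fin n => (i : ℕ) < j)) := by
  ext i
  simp [Finset.mem_insert, Fin.ext_iff]
  omega

lemma filter_gt_succ (j : ℕ) (hj : j + 2 < n) :
    Finset.univ.filter (fun i : Fin n => j + 1 < (i : ℕ))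
      = insert ⟨j + 2, hj⟩ (Finset.univ.filter (fun i : Fin n => j + 2 < (i : ℕ))) := by
  ext i
  simp [Finset.mem_insert, Fin.ext_iff]
  omega

lemma Wt_succ (η : ℂ) (lam : Fin N → ℂ) (j : ℕ) (hj : j + 2 < n) (k : Fin n → Fin N) :
    Wt η lam (j + 1) k
      = Wt η lam j k - η • eps (k ⟨j, by omega⟩) - η • eps (k ⟨j + 2, hj⟩) := by
  unfold Wt
  rw [filter_lt_succ j (by omega), filter_gt_succ j hj,
      Finset.sum_insert (by simp), Finset.sum_insert (by simp)]
  simp only [smul_add]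
  abel

end Wt

section SopApply

variable {N : ℕ} (η : ℂ) (R : ℂ → (Fin N → ℂ) → Matrix (Fin N × Fin N) (Fin N × Fin N) ℂ)
  {n : ℕ}

lemma Sop_apply' (j : ℕ) (hj : j + 1 < n) (f : FSpace n N) (z : Fin n → ℂ)
    (lam : Fin N → ℂ) (k : Fin n → Fin N) :
    Sop η R n j f z lam k
      = ∑ a : Fin N, ∑ b : Fin N,
          R (z ⟨j, by omega⟩ - z ⟨j + 1, hj⟩)
            (Wt η lam j (U2 k ⟨j, by omega⟩ ⟨j + 1, hj⟩ a b))
            (k ⟨j, by omega⟩, k ⟨j + 1, hj⟩) (b, a)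
          * f (z ∘ Equiv.swap (⟨j, by omega⟩ : Fin n) ⟨j + 1, hj⟩) lam
              (U2 k ⟨j, by omega⟩ ⟨j + 1, hj⟩ a b) := by
  have hne : (⟨j, by omega⟩ : Fin n) ≠ ⟨j + 1, hj⟩ := by
    simp only [ne_eq, Fin.mk.injEq]; omega
  rw [Sop, dif_pos hj]
  simp only [ite_mul, zero_mul]
  rw [sum_delta j (j + 1) (by omega) hj (by omega) k]
  refine Finset.sum_congr rfl fun a _ => Finset.sum_congr rfl fun b _ => ?_
  rw [U2_fst _ hne, U2_snd]
  rfl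

end SopApply

section Entries

variable {N : ℕ}

lemma mul_Pflip (M : Matrix (Fin N × Fin N) (Fin N × Fin N) ℂ) (p q : Fin N × Fin N) :
    (M * Pflip N) p q = M p (q.2, q.1) := by
  rw [Matrix.mul_apply]
  have h : ∀ r : Fin N × Fin N, M p r * Pflip N r q
      = if r = (q.2, q.1) then M p r else 0 := by
    intro r
    by_cases hr : r = (q.2, q.1)
    · subst hr; simp [Pflip]
    · rw [if_neg hr]
      have : ¬(r.1 = q.2 ∧ r.2 = q.1) := by
        intro ⟨h1, h2⟩; exact hr (Prod.ext h1 h2)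
      simp [Pflip, this]
  rw [Finset.sum_congr rfl fun r _ => h r]
  simp

lemma unit_entry {η : ℂ} {R : ℂ → (Fin N → ℂ) → Matrix (Fin N × Fin N) (Fin N × Fin N) ℂ}
    (hR : IsGQR N η R) (z : ℂ) (lam : Fin N → ℂ) (p q : Fin N × Fin N) :
    (∑ a : Fin N, ∑ b : Fin N, R z lam p (b, a) * R (-z) lam (a, b) (q.2, q.1))
      = if p = q then 1 else 0 := by
  have h : (R z lam * Pflip N * R (-z) lam * Pflip N) p q
      = (1 : Matrix (Fin N × Fin N) (Fin N × Fin N) ℂ) p q := by rw [hR.2.1 z lam]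
  rw [mul_Pflip, Matrix.mul_apply] at h
  simp only [mul_Pflip] at h
  rw [Matrix.one_apply] at h
  rw [Fintype.sum_prod_type] at h
  exact h

end Entries

section MoreU2

variable {n N : ℕ}

lemma U2_U2 (k : Fin n → Fin N) (p q : Fin n) (a b a' b' : Fin N) :
    U2 (U2 k p q a b) p q a' b' = U2 k p q a' b' := by
  funext i
  simp only [U2_apply]
  split_ifs <;> rfl

lemma Wt_U2_self (η : ℂ) (lam : Fin N → ℂ) (j : ℕ) (hj : j + 1 < n)
    (k : Fin n → Fin N) (a b : Fin N) :
    Wt η lam j (U2 k ⟨j, by omega⟩ ⟨j + 1, hj⟩ a b) = Wt η lam j k := by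
  unfold U2
  rw [Wt_update_mid η lam j _ (by simp) (by simp) b,
      Wt_update_mid η lam j k (by simp) (by simp) a]

end MoreU2

section Rearr

variable {α : Type*} [Fintype α]

lemma rearr4 (g : α → α → α → α → ℂ) :
    (∑ x0 : α, ∑ x1 : α, ∑ x2 : α, ∑ x3 : α, g x0 x1 x2 x3) = (∑ x2 : α, ∑ x3 : α, ∑ x0 : α, ∑ x1 : α, g x0 x1 x2 x3) := by
  calc (∑ x0 : α, ∑ x1 : α, ∑ x2 : α, ∑ x3 : α, g x0 x1 x2 x3)
      _ = (∑ x0 : α, ∑ x2 : α, ∑ x1 : α, ∑ x3 : α, g x0 x1 x2 x3) := by refine Finset.sum_congr rfl fun _ _ => ?_; exact Finset.sum_comm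
      _ = (∑ x2 : α, ∑ x0 : α, ∑ x1 : α, ∑ x3 : α, g x0 x1 x2 x3) := by exact Finset.sum_comm
      _ = (∑ x2 : α, ∑ x0 : α, ∑ x3 : α, ∑ x1 : α, g x0 x1 x2 x3) := by refine Finset.sum_congr rfl fun _ _ => ?_; refine Finset.sum_congr rfl fun _ _ => ?_; exact Finset.sum_comm
      _ = (∑ x2 : α, ∑ x3 : α, ∑ x0 : α, ∑ x1 : α, g x0 x1 x2 x3) := by refine Finset.sum_congr rfl fun _ _ => ?_; exact Finset.sum_comm

lemma rearr6L (g : α → α → α → α → α → α → ℂ) :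
    (∑ x0 : α, ∑ x1 : α, ∑ x2 : α, ∑ x3 : α, ∑ x4 : α, ∑ x5 : α, g x0 x1 x2 x3 x4 x5) = (∑ x4 : α, ∑ x5 : α, ∑ x3 : α, ∑ x0 : α, ∑ x2 : α, ∑ x1 : α, g x0 x1 x2 x3 x4 x5) := by
  calc (∑ x0 : α, ∑ x1 : α, ∑ x2 : α, ∑ x3 : α, ∑ x4 : α, ∑ x5 : α, g x0 x1 x2 x3 x4 x5)
      _ = (∑ x0 : α, ∑ x1 : α, ∑ x2 : α, ∑ x4 : α, ∑ x3 : α, ∑ x5 : α, g x0 x1 x2 x3 x4 x5) := by refine Finset.sum_congr rfl fun _ _ => ?_; refine Finset.sum_congr rfl fun _ _ => ?_; refine Finset.sum_congr rfl fun _ _ => ?_; exact Finset.sum_comm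
      _ = (∑ x0 : α, ∑ x1 : α, ∑ x4 : α, ∑ x2 : α, ∑ x3 : α, ∑ x5 : α, g x0 x1 x2 x3 x4 x5) := by refine Finset.sum_congr rfl fun _ _ => ?_; refine Finset.sum_congr rfl fun _ _ => ?_; exact Finset.sum_comm
      _ = (∑ x0 : α, ∑ x4 : α, ∑ x1 : α, ∑ x2 : α, ∑ x3 : α, ∑ x5 : α, g x0 x1 x2 x3 x4 x5) := by refine Finset.sum_congr rfl fun _ _ => ?_; exact Finset.sum_comm
      _ = (∑ x4 : α, ∑ x0 : α, ∑ x1 : α, ∑ x2 : α, ∑ x3 : α, ∑ x5 : α, g x0 x1 x2 x3 x4 x5) := by exact Finset.sum_comm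
      _ = (∑ x4 : α, ∑ x0 : α, ∑ x1 : α, ∑ x2 : α, ∑ x5 : α, ∑ x3 : α, g x0 x1 x2 x3 x4 x5) := by refine Finset.sum_congr rfl fun _ _ => ?_; refine Finset.sum_congr rfl fun _ _ => ?_; refine Finset.sum_congr rfl fun _ _ => ?_; refine Finset.sum_congr rfl fun _ _ => ?_; exact Finset.sum_comm
      _ = (∑ x4 : α, ∑ x0 : α, ∑ x1 : α, ∑ x5 : α, ∑ x2 : α, ∑ x3 : α, g x0 x1 x2 x3 x4 x5) := by refine Finset.sum_congr rfl fun _ _ => ?_; refine Finset.sum_congr rfl fun _ _ => ?_; refine Finset.sum_congr rfl fun _ _ => ?_; exact Finset.sum_comm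
      _ = (∑ x4 : α, ∑ x0 : α, ∑ x5 : α, ∑ x1 : α, ∑ x2 : α, ∑ x3 : α, g x0 x1 x2 x3 x4 x5) := by refine Finset.sum_congr rfl fun _ _ => ?_; refine Finset.sum_congr rfl fun _ _ => ?_; exact Finset.sum_comm
      _ = (∑ x4 : α, ∑ x5 : α, ∑ x0 : α, ∑ x1 : α, ∑ x2 : α, ∑ x3 : α, g x0 x1 x2 x3 x4 x5) := by refine Finset.sum_congr rfl fun _ _ => ?_; exact Finset.sum_comm
      _ = (∑ x4 : α, ∑ x5 : α, ∑ x0 : α, ∑ x1 : α, ∑ x3 : α, ∑ x2 : α, g x0 x1 x2 x3 x4 x5) := by refine Finset.sum_congr rfl fun _ _ => ?_; refine Finset.sum_congr rfl fun _ _ => ?_; refine Finset.sum_congr rfl fun _ _ => ?_; refine Finset.sum_congr rfl fun _ _ => ?_; exact Finset.sum_comm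
      _ = (∑ x4 : α, ∑ x5 : α, ∑ x0 : α, ∑ x3 : α, ∑ x1 : α, ∑ x2 : α, g x0 x1 x2 x3 x4 x5) := by refine Finset.sum_congr rfl fun _ _ => ?_; refine Finset.sum_congr rfl fun _ _ => ?_; refine Finset.sum_congr rfl fun _ _ => ?_; exact Finset.sum_comm
      _ = (∑ x4 : α, ∑ x5 : α, ∑ x3 : α, ∑ x0 : α, ∑ x1 : α, ∑ x2 : α, g x0 x1 x2 x3 x4 x5) := by refine Finset.sum_congr rfl fun _ _ => ?_; refine Finset.sum_congr rfl fun _ _ => ?_; exact Finset.sum_comm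
      _ = (∑ x4 : α, ∑ x5 : α, ∑ x3 : α, ∑ x0 : α, ∑ x2 : α, ∑ x1 : α, g x0 x1 x2 x3 x4 x5) := by refine Finset.sum_congr rfl fun _ _ => ?_; refine Finset.sum_congr rfl fun _ _ => ?_; refine Finset.sum_congr rfl fun _ _ => ?_; refine Finset.sum_congr rfl fun _ _ => ?_; exact Finset.sum_comm

lemma rearr6R (g : α → α → α → α → α → α → ℂ) :
    (∑ x0 : α, ∑ x1 : α, ∑ x2 : α, ∑ x3 : α, ∑ x4 : α, ∑ x5 : α, g x0 x1 x2 x3 x4 x5) = (∑ x2 : α, ∑ x4 : α, ∑ x5 : α, ∑ x3 : α, ∑ x1 : α, ∑ x0 : α, g x0 x1 x2 x3 x4 x5) := by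
  calc (∑ x0 : α, ∑ x1 : α, ∑ x2 : α, ∑ x3 : α, ∑ x4 : α, ∑ x5 : α, g x0 x1 x2 x3 x4 x5)
      _ = (∑ x0 : α, ∑ x2 : α, ∑ x1 : α, ∑ x3 : α, ∑ x4 : α, ∑ x5 : α, g x0 x1 x2 x3 x4 x5) := by refine Finset.sum_congr rfl fun _ _ => ?_; exact Finset.sum_comm
      _ = (∑ x2 : α, ∑ x0 : α, ∑ x1 : α, ∑ x3 : α, ∑ x4 : α, ∑ x5 : α, g x0 x1 x2 x3 x4 x5) := by exact Finset.sum_comm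
      _ = (∑ x2 : α, ∑ x0 : α, ∑ x1 : α, ∑ x4 : α, ∑ x3 : α, ∑ x5 : α, g x0 x1 x2 x3 x4 x5) := by refine Finset.sum_congr rfl fun _ _ => ?_; refine Finset.sum_congr rfl fun _ _ => ?_; refine Finset.sum_congr rfl fun _ _ => ?_; exact Finset.sum_comm
      _ = (∑ x2 : α, ∑ x0 : α, ∑ x4 : α, ∑ x1 : α, ∑ x3 : α, ∑ x5 : α, g x0 x1 x2 x3 x4 x5) := by refine Finset.sum_congr rfl fun _ _ => ?_; refine Finset.sum_congr rfl fun _ _ => ?_; exact Finset.sum_comm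
      _ = (∑ x2 : α, ∑ x4 : α, ∑ x0 : α, ∑ x1 : α, ∑ x3 : α, ∑ x5 : α, g x0 x1 x2 x3 x4 x5) := by refine Finset.sum_congr rfl fun _ _ => ?_; exact Finset.sum_comm
      _ = (∑ x2 : α, ∑ x4 : α, ∑ x0 : α, ∑ x1 : α, ∑ x5 : α, ∑ x3 : α, g x0 x1 x2 x3 x4 x5) := by refine Finset.sum_congr rfl fun _ _ => ?_; refine Finset.sum_congr rfl fun _ _ => ?_; refine Finset.sum_congr rfl fun _ _ => ?_; refine Finset.sum_congr rfl fun _ _ => ?_; exact Finset.sum_comm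
      _ = (∑ x2 : α, ∑ x4 : α, ∑ x0 : α, ∑ x5 : α, ∑ x1 : α, ∑ x3 : α, g x0 x1 x2 x3 x4 x5) := by refine Finset.sum_congr rfl fun _ _ => ?_; refine Finset.sum_congr rfl fun _ _ => ?_; refine Finset.sum_congr rfl fun _ _ => ?_; exact Finset.sum_comm
      _ = (∑ x2 : α, ∑ x4 : α, ∑ x5 : α, ∑ x0 : α, ∑ x1 : α, ∑ x3 : α, g x0 x1 x2 x3 x4 x5) := by refine Finset.sum_congr rfl fun _ _ => ?_; refine Finset.sum_congr rfl fun _ _ => ?_; exact Finset.sum_comm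
      _ = (∑ x2 : α, ∑ x4 : α, ∑ x5 : α, ∑ x0 : α, ∑ x3 : α, ∑ x1 : α, g x0 x1 x2 x3 x4 x5) := by refine Finset.sum_congr rfl fun _ _ => ?_; refine Finset.sum_congr rfl fun _ _ => ?_; refine Finset.sum_congr rfl fun _ _ => ?_; refine Finset.sum_congr rfl fun _ _ => ?_; exact Finset.sum_comm
      _ = (∑ x2 : α, ∑ x4 : α, ∑ x5 : α, ∑ x3 : α, ∑ x0 : α, ∑ x1 : α, g x0 x1 x2 x3 x4 x5) := by refine Finset.sum_congr rfl fun _ _ => ?_; refine Finset.sum_congr rfl fun _ _ => ?_; refine Finset.sum_congr rfl fun _ _ => ?_; exact Finset.sum_comm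
      _ = (∑ x2 : α, ∑ x4 : α, ∑ x5 : α, ∑ x3 : α, ∑ x1 : α, ∑ x0 : α, g x0 x1 x2 x3 x4 x5) := by refine Finset.sum_congr rfl fun _ _ => ?_; refine Finset.sum_congr rfl fun _ _ => ?_; refine Finset.sum_congr rfl fun _ _ => ?_; refine Finset.sum_congr rfl fun _ _ => ?_; exact Finset.sum_comm

end Rearr

section Mybe

variable {N : ℕ} {η : ℂ} {R : ℂ → (Fin N → ℂ) → Matrix (Fin N × Fin N) (Fin N × Fin N) ℂ}

lemma sum_ite_const {α : Type*} [Fintype α] {P : Prop} [Decidable P] (f : α → ℂ) :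
    (∑ x : α, if P then f x else 0) = if P then ∑ x : α, f x else 0 := by
  split_ifs <;> simp

lemma mybe_entry (hR : IsGQR N η R) (z₁ z₂ z₃ : ℂ) (lam : Fin N → ℂ)
    (a b c x y z : Fin N) :
    (∑ a₁ : Fin N, ∑ b₂ : Fin N, ∑ b₁ : Fin N,
      R (z₁ - z₂) (lam + η • eps c) (a, b) (b₁, a₁)
        * R (z₁ - z₃) (lam + (-η) • eps a₁) (b₁, c) (z, b₂)
        * R (z₂ - z₃) (lam + η • eps z) (a₁, b₂) (y, x))
    = ∑ b₂ : Fin N, ∑ c₁ : Fin N, ∑ b₁ : Fin N,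
      R (z₂ - z₃) (lam + (-η) • eps a) (b, c) (c₁, b₁)
        * R (z₁ - z₃) (lam + η • eps c₁) (a, b₁) (b₂, x)
        * R (z₁ - z₂) (lam + (-η) • eps x) (b₂, c₁) (z, y) := by
  have h2 : (sh12 R η (z₁ - z₂) lam * sh13 R (-η) (z₁ - z₃) lam * sh23 R η (z₂ - z₃) lam)
        (a, b, c) (z, y, x)
      = (sh23 R (-η) (z₂ - z₃) lam * sh13 R η (z₁ - z₃) lam * sh12 R (-η) (z₁ - z₂) lam)
        (a, b, c) (z, y, x) := by rw [hR.2.2 z₁ z₂ z₃ lam]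
  simp only [Matrix.mul_apply, sh12, sh13, sh23, Matrix.of_apply, Fintype.sum_prod_type,
    ite_mul, zero_mul, mul_ite, mul_zero, Finset.sum_ite_eq, Finset.sum_ite_eq',
    Finset.mem_univ, if_true, Finset.sum_mul, sum_ite_const] at h2
  exact h2

end Mybe

section Unit'

variable {N : ℕ}

lemma unit_entry' {η : ℂ} {R : ℂ → (Fin N → ℂ) → Matrix (Fin N × Fin N) (Fin N × Fin N) ℂ}
    (hR : IsGQR N η R) (z : ℂ) (lam : Fin N → ℂ) (p1 p2 q1 q2 : Fin N) :
    (∑ a : Fin N, ∑ b : Fin N, R z lam (p1, p2) (b, a) * R (-z) lam (a, b) (q2, q1))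
      = if p1 = q1 ∧ p2 = q2 then 1 else 0 := by
  rw [unit_entry hR z lam (p1, p2) (q1, q2)]
  simp [Prod.ext_iff]

end Unit'

section Dis

variable {n N : ℕ}

lemma U2_disjoint_comm (k : Fin n → Fin N) {p q r s : Fin n}
    (hpr : p ≠ r) (hps : p ≠ s) (hqr : q ≠ r) (hqs : q ≠ s) (a b c d : Fin N) :
    U2 (U2 k p q a b) r s c d = U2 (U2 k r s c d) p q a b := by
  funext i
  simp only [U2_apply]
  split_ifs <;> simp_all

lemma swap_disjoint_comm {p q r s : Fin n} (hpr : p ≠ r) (hps : p ≠ s)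
    (hqr : q ≠ r) (hqs : q ≠ s) (i : Fin n) :
    Equiv.swap r s (Equiv.swap p q i) = Equiv.swap p q (Equiv.swap r s i) := by
  simp only [Equiv.swap_apply_def]
  split_ifs <;> simp_all
end Dis

section Braid

variable {n N : ℕ}

lemma U3_1 (k : Fin n → Fin N) {p q r : Fin n} (hpq : p ≠ q) (hpr : p ≠ r)
    (x y w : Fin N) : U3 k p q r x y w p = x := by
  simp [U3_apply, hpq, hpr]

lemma U3_2 (k : Fin n → Fin N) {p q r : Fin n} (hqr : q ≠ r)
    (x y w : Fin N) : U3 k p q r x y w q = y := by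
  simp [U3_apply, hqr]

lemma U3_3 (k : Fin n → Fin N) (p q r : Fin n)
    (x y w : Fin N) : U3 k p q r x y w r = w := by
  simp [U3_apply]

lemma CL1 (k : Fin n → Fin N) {p q r : Fin n} (hpq : p ≠ q) (hpr : p ≠ r) (hqr : q ≠ r)
    (a b c d : Fin N) : U2 (U2 k p q a b) q r c d = U3 k p q r a c d := by
  funext i
  simp only [U2_apply, U3_apply]
  split_ifs <;> simp_all

lemma CL2 (k : Fin n → Fin N) {p q r : Fin n} (hpq : p ≠ q) (hpr : p ≠ r) (hqr : q ≠ r)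
    (x y w a b : Fin N) : U2 (U3 k p q r x y w) p q a b = U3 k p q r a b w := by
  funext i
  simp only [U2_apply, U3_apply]
  split_ifs <;> simp_all

lemma CR1 (k : Fin n → Fin N) {p q r : Fin n} (hpq : p ≠ q) (hpr : p ≠ r) (hqr : q ≠ r)
    (b c a d : Fin N) : U2 (U2 k q r b c) p q a d = U3 k p q r a d c := by
  funext i
  simp only [U2_apply, U3_apply]
  split_ifs <;> simp_all

lemma CR2 (k : Fin n → Fin N) {p q r : Fin n} (hpq : p ≠ q) (hpr : p ≠ r) (hqr : q ≠ r)
    (x y w b c : Fin N) : U2 (U3 k p q r x y w) q r b c = U3 k p q r x b c := by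
  funext i
  simp only [U2_apply, U3_apply]
  split_ifs <;> simp_all

lemma swap_braid {p q r : Fin n} (hpq : p ≠ q) (hpr : p ≠ r) (hqr : q ≠ r) (i : Fin n) :
    Equiv.swap p q (Equiv.swap q r (Equiv.swap p q i))
      = Equiv.swap q r (Equiv.swap p q (Equiv.swap q r i)) := by
  have h1 : Equiv.swap p q (Equiv.swap q r (Equiv.swap p q i))
      = (Equiv.swap p q * Equiv.swap q r * (Equiv.swap p q)⁻¹) i := by
    simp [Equiv.Perm.mul_apply, Equiv.swap_inv]
  have h2 : Equiv.swap q r (Equiv.swap p q (Equiv.swap q r i))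
      = (Equiv.swap q r * Equiv.swap p q * (Equiv.swap q r)⁻¹) i := by
    simp [Equiv.Perm.mul_apply, Equiv.swap_inv]
  rw [h1, h2, ← Equiv.swap_apply_apply, ← Equiv.swap_apply_apply]
  simp only [Equiv.swap_apply_left, Equiv.swap_apply_right,
    Equiv.swap_apply_of_ne_of_ne hpr.symm hqr.symm,
    Equiv.swap_apply_of_ne_of_ne hpq hpr]

end Braid

/-- the operators `S_j` satisfy the defining relations of the
symmetric group `Sₙ`, hence define a representation of `Sₙ` on `F`. -/
theorem Sop_symmetric_group_relations (N : ℕ) (hN : 1 ≤ N) (η : ℂ)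
    (R : ℂ → (Fin N → ℂ) → Matrix (Fin N × Fin N) (Fin N × Fin N) ℂ)
    (hR : IsGQR N η R) (n : ℕ) (hn : 2 ≤ n) :
    (∀ j : ℕ, j + 1 < n → Sop η R n j ∘ Sop η R n j = id) ∧
    (∀ j : ℕ, j + 2 < n →
      Sop η R n j ∘ Sop η R n (j + 1) ∘ Sop η R n j =
      Sop η R n (j + 1) ∘ Sop η R n j ∘ Sop η R n (j + 1)) ∧
    (∀ j l : ℕ, j + 1 < n → l + 1 < n → (j + 2 ≤ l ∨ l + 2 ≤ j) →
      Sop η R n j ∘ Sop η R n l = Sop η R n l ∘ Sop η R n j) := by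
  refine ⟨?_, ?_, ?_⟩
  · -- involution
    intro j hj
    funext f z lam k
    simp only [Function.comp_apply, id_eq]
    have hjn : j < n := by omega
    have hne : (⟨j, hjn⟩ : Fin n) ≠ ⟨j + 1, hj⟩ := by
      simp only [ne_eq, Fin.mk.injEq]; omega
    simp only [Sop_apply' η R j hj]
    have hswap : (z ∘ (Equiv.swap (⟨j, hjn⟩ : Fin n) ⟨j + 1, hj⟩))
        ∘ (Equiv.swap (⟨j, hjn⟩ : Fin n) ⟨j + 1, hj⟩) = z := by
      funext i
      simp [Function.comp, Equiv.swap_apply_self]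
    simp only [hswap, U2_U2, Wt_U2_self η lam j hj, Function.comp_apply,
      Equiv.swap_apply_left, Equiv.swap_apply_right, U2_fst _ hne, U2_snd]
    have hneg : z ⟨j + 1, hj⟩ - z ⟨j, hjn⟩ = -(z ⟨j, hjn⟩ - z ⟨j + 1, hj⟩) := by ring
    rw [hneg]
    simp only [Finset.mul_sum]
    refine Eq.trans (rearr4 _) ?_
    simp only [← mul_assoc, ← Finset.sum_mul]
    simp only [unit_entry' hR]
    simp only [ite_and, ite_mul, zero_mul, one_mul, sum_ite_const, Finset.sum_ite_eq,
      Finset.mem_univ, if_true]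
    rw [U2_self k hne]
  · -- braid
    intro j hj
    funext f z lam k
    simp only [Function.comp_apply]
    have hjn : j < n := by omega
    have hj1 : j + 1 < n := by omega
    have hj2 : j + 2 < n := hj
    have hj11 : j + 1 + 1 < n := by omega
    have e01 : (⟨j, hjn⟩ : Fin n) ≠ ⟨j + 1, hj1⟩ := by
      simp only [ne_eq, Fin.mk.injEq]; omega
    have e02 : (⟨j, hjn⟩ : Fin n) ≠ ⟨j + 2, hj2⟩ := by
      simp only [ne_eq, Fin.mk.injEq]; omega
    have e12 : (⟨j + 1, hj1⟩ : Fin n) ≠ ⟨j + 2, hj2⟩ := by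
      simp only [ne_eq, Fin.mk.injEq]; omega
    simp only [Sop_apply' η R j hj1, Sop_apply' η R (j + 1) hj11]
    simp only [show j + 1 + 1 = j + 2 from rfl]
    -- swap evaluations
    simp only [Function.comp_apply, Equiv.swap_apply_left, Equiv.swap_apply_right,
      Equiv.swap_apply_of_ne_of_ne e02.symm e12.symm,
      Equiv.swap_apply_of_ne_of_ne e01 e02]
    -- update collapses and row evaluations
    simp only [CL1 _ e01 e02 e12, CL2 _ e01 e02 e12, CR1 _ e01 e02 e12,
      CR2 _ e01 e02 e12, U2_fst _ e01, U2_fst _ e12, U2_snd,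
      U2_other _ e02.symm e12.symm, U2_other _ e01 e02,
      U3_1 _ e01 e02, U3_2 _ e12, U3_3]
    -- dynamical shifts
    set L : Fin N → ℂ := Wt η lam j k - η • eps (k ⟨j + 2, hj2⟩) with hLdef
    have hL1 : ∀ a b : Fin N, Wt η lam j (U2 k ⟨j, hjn⟩ ⟨j + 1, hj1⟩ a b)
        = L + η • eps (k ⟨j + 2, hj2⟩) := by
      intro a b
      rw [Wt_U2_self η lam j hj1, hLdef]
      abel
    have hL2 : ∀ x y w : Fin N,
        Wt η lam (j + 1) (U3 k ⟨j, hjn⟩ ⟨j + 1, hj1⟩ ⟨j + 2, hj2⟩ x y w)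
        = L + (-η) • eps x := by
      intro x y w
      unfold U3
      rw [Wt_update_mid η lam (j + 1) _ (by simp <;> omega) (by simp <;> omega) w,
          Wt_update_mid η lam (j + 1) _ (by simp) (by simp <;> omega) y,
          Wt_update_lt η lam (j + 1) k (by simp) x,
          Wt_succ η lam j hj2 k, hLdef]
      simp only [neg_smul]
      abel
    have hL3 : ∀ x y w : Fin N,
        Wt η lam j (U3 k ⟨j, hjn⟩ ⟨j + 1, hj1⟩ ⟨j + 2, hj2⟩ x y w)
        = L + η • eps w := by
      intro x y w
      unfold U3
      rw [Wt_update_gt η lam j _ (by simp) w,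
          Function.update_of_ne e12.symm, Function.update_of_ne e02.symm,
          Wt_update_mid η lam j _ (by simp) (by simp) y,
          Wt_update_mid η lam j k (by simp) (by simp) x, hLdef]
      abel
    have hR1 : ∀ b c : Fin N, Wt η lam (j + 1) (U2 k ⟨j + 1, hj1⟩ ⟨j + 2, hj2⟩ b c)
        = L + (-η) • eps (k ⟨j, hjn⟩) := by
      intro b c
      unfold U2
      rw [Wt_update_mid η lam (j + 1) _ (by simp <;> omega) (by simp <;> omega) c,
          Wt_update_mid η lam (j + 1) k (by simp) (by simp <;> omega) b,
          Wt_succ η lam j hj2 k, hLdef]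
      simp only [neg_smul]
      abel
    simp only [hL1, hL2, hL3, hR1]
    -- common f-argument
    have hbraidZ : (((z ∘ (Equiv.swap (⟨j, hjn⟩ : Fin n) ⟨j + 1, hj1⟩))
          ∘ (Equiv.swap (⟨j + 1, hj1⟩ : Fin n) ⟨j + 2, hj2⟩))
          ∘ (Equiv.swap (⟨j, hjn⟩ : Fin n) ⟨j + 1, hj1⟩))
        = (((z ∘ (Equiv.swap (⟨j + 1, hj1⟩ : Fin n) ⟨j + 2, hj2⟩))
          ∘ (Equiv.swap (⟨j, hjn⟩ : Fin n) ⟨j + 1, hj1⟩))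
          ∘ (Equiv.swap (⟨j + 1, hj1⟩ : Fin n) ⟨j + 2, hj2⟩)) := by
      funext i
      simp only [Function.comp_apply]
      exact congrArg z (swap_braid e01 e02 e12 i)
    simp only [hbraidZ]
    -- reorder sums and apply the MYBE
    simp only [Finset.mul_sum]
    refine Eq.trans (rearr6L _) (Eq.trans ?_ (rearr6R _).symm)
    refine Finset.sum_congr rfl fun x _ => Finset.sum_congr rfl fun y _ =>
      Finset.sum_congr rfl fun w _ => ?_
    simp only [← mul_assoc]
    simp only [← Finset.sum_mul]
    congr 1
    simp only [Finset.sum_mul]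
    exact mybe_entry hR (z ⟨j, hjn⟩) (z ⟨j + 1, hj1⟩) (z ⟨j + 2, hj2⟩) L
      (k ⟨j, hjn⟩) (k ⟨j + 1, hj1⟩) (k ⟨j + 2, hj2⟩) x y w
  · -- commutation
    have key : ∀ j l : ℕ, j + 1 < n → l + 1 < n → j + 2 ≤ l →
        Sop η R n j ∘ Sop η R n l = Sop η R n l ∘ Sop η R n j := by
      intro j l hj hl hlt
      funext f z lam k
      simp only [Function.comp_apply]
      have hjn : j < n := by omega
      have hln : l < n := by omega
      have hne : (⟨j, hjn⟩ : Fin n) ≠ ⟨j + 1, hj⟩ := by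
        simp only [ne_eq, Fin.mk.injEq]; omega
      have hne' : (⟨l, hln⟩ : Fin n) ≠ ⟨l + 1, hl⟩ := by
        simp only [ne_eq, Fin.mk.injEq]; omega
      have hlj : (⟨l, hln⟩ : Fin n) ≠ ⟨j, hjn⟩ := by
        simp only [ne_eq, Fin.mk.injEq]; omega
      have hlj1 : (⟨l, hln⟩ : Fin n) ≠ ⟨j + 1, hj⟩ := by
        simp only [ne_eq, Fin.mk.injEq]; omega
      have hl1j : (⟨l + 1, hl⟩ : Fin n) ≠ ⟨j, hjn⟩ := by
        simp only [ne_eq, Fin.mk.injEq]; omega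
      have hl1j1 : (⟨l + 1, hl⟩ : Fin n) ≠ ⟨j + 1, hj⟩ := by
        simp only [ne_eq, Fin.mk.injEq]; omega
      simp only [Sop_apply' η R j hj, Sop_apply' η R l hl]
      -- swap evaluations
      simp only [Function.comp_apply, Equiv.swap_apply_of_ne_of_ne hlj hlj1,
        Equiv.swap_apply_of_ne_of_ne hl1j hl1j1,
        Equiv.swap_apply_of_ne_of_ne hlj.symm hl1j.symm,
        Equiv.swap_apply_of_ne_of_ne hlj1.symm hl1j1.symm]
      -- row evaluations
      simp only [U2_other _ hlj hlj1, U2_other _ hl1j hl1j1,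
        U2_other _ hlj.symm hl1j.symm, U2_other _ hlj1.symm hl1j1.symm]
      -- Wt normalizations
      simp only [Wt_U2_self η lam j hj, Wt_U2_self η lam l hl]
      have hWL : ∀ a b : Fin N, Wt η lam l (U2 k ⟨j, hjn⟩ ⟨j + 1, hj⟩ a b)
          = Wt η lam l k - η • eps a + η • eps (k ⟨j, hjn⟩)
              - η • eps b + η • eps (k ⟨j + 1, hj⟩) := by
        intro a b
        unfold U2
        rw [Wt_update_lt η lam l _ (by simp <;> omega) b,
            Wt_update_lt η lam l k (by simp <;> omega) a,
            Function.update_of_ne hne.symm]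
      have hWR : ∀ a' b' : Fin N, Wt η lam j (U2 k ⟨l, hln⟩ ⟨l + 1, hl⟩ a' b')
          = Wt η lam j k + η • eps a' - η • eps (k ⟨l, hln⟩)
              + η • eps b' - η • eps (k ⟨l + 1, hl⟩) := by
        intro a' b'
        unfold U2
        rw [Wt_update_gt η lam j _ (by simp <;> omega) b',
            Wt_update_gt η lam j k (by simp <;> omega) a',
            Function.update_of_ne hne'.symm]
      simp only [hWL, hWR]
      -- f-argument normalizations
      have hcomp : ((z ∘ (Equiv.swap (⟨l, hln⟩ : Fin n) ⟨l + 1, hl⟩))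
            ∘ (Equiv.swap (⟨j, hjn⟩ : Fin n) ⟨j + 1, hj⟩))
          = ((z ∘ (Equiv.swap (⟨j, hjn⟩ : Fin n) ⟨j + 1, hj⟩))
            ∘ (Equiv.swap (⟨l, hln⟩ : Fin n) ⟨l + 1, hl⟩)) := by
        funext i
        simp only [Function.comp_apply]
        rw [swap_disjoint_comm hlj hlj1 hl1j hl1j1]
      simp only [hcomp, U2_disjoint_comm k hlj.symm hl1j.symm hlj1.symm hl1j1.symm]
      simp only [Finset.mul_sum]
      refine Eq.trans ?_ (rearr4 _)
      refine Finset.sum_congr rfl fun a _ => Finset.sum_congr rfl fun b _ =>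
        Finset.sum_congr rfl fun a' _ => Finset.sum_congr rfl fun b' _ => ?_
      by_cases h1 : eps (k ⟨j, hjn⟩) + eps (k ⟨j + 1, hj⟩) = eps b + eps a
      · by_cases h2 : eps (k ⟨l, hln⟩) + eps (k ⟨l + 1, hl⟩) = eps b' + eps a'
        · have e1 : Wt η lam l k - η • eps a + η • eps (k ⟨j, hjn⟩)
              - η • eps b + η • eps (k ⟨j + 1, hj⟩) = Wt η lam l k := by
            have h1' : η • eps (k ⟨j, hjn⟩) + η • eps (k ⟨j + 1, hj⟩)
                = η • eps b + η • eps a := by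
              rw [← smul_add, ← smul_add, h1]
            have : Wt η lam l k - η • eps a + η • eps (k ⟨j, hjn⟩)
                - η • eps b + η • eps (k ⟨j + 1, hj⟩)
                = Wt η lam l k + ((η • eps (k ⟨j, hjn⟩) + η • eps (k ⟨j + 1, hj⟩))
                    - (η • eps b + η • eps a)) := by abel
            rw [this, h1']
            simp
          have e2 : Wt η lam j k + η • eps a' - η • eps (k ⟨l, hln⟩)
              + η • eps b' - η • eps (k ⟨l + 1, hl⟩) = Wt η lam j k := by
            have h2' : η • eps (k ⟨l, hln⟩) + η • eps (k ⟨l + 1, hl⟩)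
                = η • eps b' + η • eps a' := by
              rw [← smul_add, ← smul_add, h2]
            have : Wt η lam j k + η • eps a' - η • eps (k ⟨l, hln⟩)
                + η • eps b' - η • eps (k ⟨l + 1, hl⟩)
                = Wt η lam j k + ((η • eps b' + η • eps a')
                    - (η • eps (k ⟨l, hln⟩) + η • eps (k ⟨l + 1, hl⟩))) := by abel
            rw [this, ← h2']
            simp
          rw [e1, e2]
          ring
        · rw [hR.1 _ _ _ _ _ _ h2, hR.1 _ _ _ _ _ _ h2]
          ring
      · rw [hR.1 _ _ _ _ _ _ h1, hR.1 _ _ _ _ _ _ h1]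
        ring
    intro j l hj hl hjl
    rcases hjl with h | h
    · exact key j l hj hl h
    · exact (key l j hl hj h).symm
end
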